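/- arXiv:2502.16254 — 14 statements merged into one kernel-verified Lean document; each statement's English description precedes it below -/
import Mathlib

section
/- Let (g, [·,·]_g, N) be a Nijenhuis Lie algebra and (V, ρ, S) a Nijenhuis representation of it. Then the bracket [(x,u), (y,v)]_⋉ := ([x,y]_g, ρ_x v − ρ_y u) makes the vector space g ⊕ V into a Lie algebra, and the map (N ⊕ S)(x,u) := (N x, S u) is a Nijenhuis operator on (g ⊕ V, [·,·]_⋉); hence the semidirect product is a Nijenhuis Lie algebra. -/
section

variable {k g V : Type*} [CommRing k] [LieRing g] [LieAlgebra k g] [AddCommGroup V] [Module k V]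

def semidirectBracket (ρ : g →ₗ[k] V →ₗ[k] V) (a b : g × V) : g × V :=
  (⁅a.1, b.1⁆, ρ a.1 b.2 - ρ b.1 a.2)

def IsNijenhuisFor {M : Type*} [Sub M] [Add M] (br : M → M → M) (T : M → M) : Prop :=
  ∀ a b, br (T a) (T b) = T (br (T a) b + br a (T b) - T (br a b))

namespace semidirectBracket

variable (ρ : g →ₗ[k] V →ₗ[k] V)

theorem add_left (a b c : g × V) :
    semidirectBracket ρ (a + b) c = semidirectBracket ρ a c + semidirectBracket ρ b c := by
  simp only [semidirectBracket, Prod.fst_add, Prod.snd_add, add_lie, map_add,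
    LinearMap.add_apply, Prod.mk_add_mk]
  congr 1
  abel

theorem add_right (a b c : g × V) :
    semidirectBracket ρ a (b + c) = semidirectBracket ρ a b + semidirectBracket ρ a c := by
  simp only [semidirectBracket, Prod.fst_add, Prod.snd_add, lie_add, map_add,
    LinearMap.add_apply, Prod.mk_add_mk]
  congr 1
  abel

theorem smul_left (t : k) (a b : g × V) :
    semidirectBracket ρ (t • a) b = t • semidirectBracket ρ a b := by
  simp [semidirectBracket, smul_lie, smul_sub]

theorem smul_right (t : k) (a b : g × V) :
    semidirectBracket ρ a (t • b) = t • semidirectBracket ρ a b := by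
  simp [semidirectBracket, lie_smul, smul_sub]

theorem self (a : g × V) : semidirectBracket ρ a a = 0 := by
  simp [semidirectBracket]

theorem jacobi (hρ : ∀ x y : g, ∀ v : V, ρ ⁅x, y⁆ v = ρ x (ρ y v) - ρ y (ρ x v))
    (a b c : g × V) :
    semidirectBracket ρ a (semidirectBracket ρ b c) +
      semidirectBracket ρ b (semidirectBracket ρ c a) +
      semidirectBracket ρ c (semidirectBracket ρ a b) = 0 := by
  simp only [semidirectBracket, Prod.mk_add_mk, Prod.ext_iff, map_sub, hρ, Prod.fst_zero,
    Prod.snd_zero]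
  exact ⟨lie_jacobi a.1 b.1 c.1, by abel⟩

/-- The `V`-component of the Nijenhuis identity for `N ⊕ S`: the Nijenhuis-representation
condition for `(x, v)` minus the one for `(y, u)`. -/
theorem nijenhuis_snd {N : g →ₗ[k] g} {S : V →ₗ[k] V}
    (hS : ∀ (x : g) (v : V), ρ (N x) (S v) = S (ρ (N x) v + ρ x (S v) - S (ρ x v)))
    (x y : g) (u v : V) :
    ρ (N x) (S v) - ρ (N y) (S u) =
      S ((ρ (N x) v - ρ y (S u)) + (ρ x (S v) - ρ (N y) u) - S (ρ x v - ρ y u)) := by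
  simp only [map_add, map_sub, hS]
  abel

theorem isNijenhuisFor_prodMap {N : g →ₗ[k] g} {S : V →ₗ[k] V}
    (hN : IsNijenhuisFor (fun x y : g => ⁅x, y⁆) N)
    (hS : ∀ (x : g) (v : V), ρ (N x) (S v) = S (ρ (N x) v + ρ x (S v) - S (ρ x v))) :
    IsNijenhuisFor (semidirectBracket ρ) (Prod.map N S) := by
  intro a b
  refine Prod.ext ?_ ?_
  · simpa [semidirectBracket, map_add, map_sub] using hN a.1 b.1
  · simpa [semidirectBracket, map_add, map_sub] using nijenhuis_snd ρ hS a.1 b.1 a.2 b.2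

end semidirectBracket

end

/-- The semidirect product of a Nijenhuis Lie algebra with a Nijenhuis
representation is a Nijenhuis Lie algebra: the bracket
`[(x,u),(y,v)] = ([x,y], ρ x v - ρ y u)` is a Lie bracket on `g × V` and
`(N ⊕ S)(x,u) = (N x, S u)` is a Nijenhuis operator for it. -/
theorem stmt_0 {k g V : Type*} [Field k]
    [LieRing g] [LieAlgebra k g]
    [AddCommGroup V] [Module k V]
    (N : g →ₗ[k] g)
    (hN : ∀ x y : g, ⁅N x, N y⁆ = N (⁅N x, y⁆ + ⁅x, N y⁆ - N ⁅x, y⁆))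
    (ρ : g →ₗ[k] V →ₗ[k] V)
    (hρ : ∀ x y : g, ∀ v : V, ρ ⁅x, y⁆ v = ρ x (ρ y v) - ρ y (ρ x v))
    (S : V →ₗ[k] V)
    (hS : ∀ (x : g) (v : V), ρ (N x) (S v) = S (ρ (N x) v + ρ x (S v) - S (ρ x v))) :
    ∀ br : g × V → g × V → g × V,
      br = (fun a b => (⁅a.1, b.1⁆, ρ a.1 b.2 - ρ b.1 a.2)) →
    ∀ NS : g × V → g × V, NS = (fun a => (N a.1, S a.2)) →
      -- the bracket is bilinear
      (∀ a b c : g × V, br (a + b) c = br a c + br b c) ∧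
      (∀ a b c : g × V, br a (b + c) = br a b + br a c) ∧
      (∀ (t : k) (a b : g × V), br (t • a) b = t • br a b) ∧
      (∀ (t : k) (a b : g × V), br a (t • b) = t • br a b) ∧
      -- the bracket is alternating and satisfies the Jacobi identity
      (∀ a : g × V, br a a = 0) ∧
      (∀ a b c : g × V, br a (br b c) + br b (br c a) + br c (br a b) = 0) ∧
      -- N ⊕ S is a Nijenhuis operator for this bracket
      (∀ a b : g × V, br (NS a) (NS b)
        = NS (br (NS a) b + br a (NS b) - NS (br a b))) := by
  rintro br rfl NS rfl
  exact ⟨semidirectBracket.add_left ρ, semidirectBracket.add_right ρ,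
    semidirectBracket.smul_left ρ, semidirectBracket.smul_right ρ, semidirectBracket.self ρ,
    semidirectBracket.jacobi ρ hρ, semidirectBracket.isNijenhuisFor_prodMap ρ hN hS⟩
end

section
/- Let 0 → (h, [·,·]_h, S) →ⁱ (e, [·,·]_e, U) →ᵖ (g, [·,·]_g, N) → 0 be a non-abelian extension of Nijenhuis Lie algebras and let s : g → e be a section of p. Then the maps χ(x,y) := [s x, s y]_e − s[x,y]_g and F := U ∘ s − s ∘ N take values in h, each ψ_x := [s x, −]_e restricts to a Lie algebra derivation of h, and the triple (χ, ψ, F) is a non-abelian 2-cocycle of (g, [·,·]_g, N) with values in (h, [·,·]_h, S), i.e. it satisfies identities (nc1)–(nc4). -/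
/-!
Choose preimages along `i` of the three maps; they exist because each is killed by `p`
(`p` is a Lie morphism inverse to `s` and intertwines `U` with `N`). Since `i` is an injective
Lie morphism with `U ∘ i = i ∘ S`, every cocycle identity in `h` follows from its image in `e`,
where it holds for an arbitrary linear map `s`: (nc1) and the derivation property are the
Jacobi identity, (nc2) is the Bianchi identity for the curvature of `s`, (nc3) is a
rearrangement of the Nijenhuis identity of `U`, and (nc4) one of those of `U` and `N`.
-/

namespace LinearMap

variable {R L M : Type*} [CommRing R] [LieRing L] [LieAlgebra R L] [LieRing M] [LieAlgebra R M]

def IsNijenhuis (N : L →ₗ[R] L) : Prop :=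
  ∀ x y : L, ⁅N x, N y⁆ = N (⁅N x, y⁆ + ⁅x, N y⁆ - N ⁅x, y⁆)

def lieCurvature (s : L →ₗ[R] M) (x y : L) : M := ⁅s x, s y⁆ - s ⁅x, y⁆

theorem lieCurvature_cyclic (s : L →ₗ[R] M) (x y z : L) :
    ⁅s x, s.lieCurvature y z⁆ + ⁅s y, s.lieCurvature z x⁆ + ⁅s z, s.lieCurvature x y⁆
      - s.lieCurvature ⁅x, y⁆ z - s.lieCurvature ⁅y, z⁆ x - s.lieCurvature ⁅z, x⁆ y = 0 := by
  have jacobi_L : s ⁅z, ⁅x, y⁆⁆ + s ⁅x, ⁅y, z⁆⁆ + s ⁅y, ⁅z, x⁆⁆ = 0 := by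
    rw [← map_add, ← map_add, lie_jacobi, map_zero]
  simp only [lieCurvature, lie_sub, ← lie_skew ⁅x, y⁆ z, ← lie_skew ⁅y, z⁆ x, ← lie_skew ⁅z, x⁆ y,
    ← lie_skew (s ⁅x, y⁆) (s z), ← lie_skew (s ⁅y, z⁆) (s x), ← lie_skew (s ⁅z, x⁆) (s y), map_neg]
  linear_combination (norm := abel) lie_jacobi (s x) (s y) (s z) - jacobi_L

theorem IsNijenhuis.lie_map_right_eq {U : M →ₗ[R] M} (hU : U.IsNijenhuis) (b c a : M) :
    ⁅c, U a⁆ = U (⁅c, a⁆ + ⁅b, U a⁆ - U ⁅b, a⁆) + U ⁅U b - c, a⁆ - ⁅U b - c, U a⁆ := by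
  simp only [sub_lie, hU b a, map_add, map_sub]
  abel

theorem IsNijenhuis.lieCurvature_cocycle {N : L →ₗ[R] L} {U : M →ₗ[R] M} (hN : N.IsNijenhuis)
    (hU : U.IsNijenhuis) (s : L →ₗ[R] M) (x y : L) :
    s.lieCurvature (N x) (N y) - U (s.lieCurvature (N x) y + s.lieCurvature x (N y)
        - U (s.lieCurvature x y))
      - (U ∘ₗ s - s ∘ₗ N) (⁅N x, y⁆ + ⁅x, N y⁆ - N ⁅x, y⁆)
      + ⁅s (N x), (U ∘ₗ s - s ∘ₗ N) y⁆ - ⁅s (N y), (U ∘ₗ s - s ∘ₗ N) x⁆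
      - U (⁅s x, (U ∘ₗ s - s ∘ₗ N) y⁆ - ⁅s y, (U ∘ₗ s - s ∘ₗ N) x⁆ - (U ∘ₗ s - s ∘ₗ N) ⁅x, y⁆)
      + ⁅(U ∘ₗ s - s ∘ₗ N) x, (U ∘ₗ s - s ∘ₗ N) y⁆ = 0 := by
  rw [sub_apply, comp_apply, comp_apply, ← hN x y]
  simp only [lieCurvature, sub_apply, comp_apply, lie_sub, sub_lie, hU (s x) (s y), map_add,
    map_sub]
  rw [← lie_skew (s (N y)) (U (s x)), ← lie_skew (s (N y)) (s (N x)), ← lie_skew (s y) (U (s x)),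
    ← lie_skew (s y) (s (N x))]
  simp only [map_neg]
  abel

end LinearMap

theorem stmt_1_general {k g h e : Type*} [Field k]
    [LieRing g] [LieAlgebra k g] [LieRing h] [LieAlgebra k h]
    [LieRing e] [LieAlgebra k e]
    (N : g →ₗ[k] g) (S : h →ₗ[k] h) (U : e →ₗ[k] e)
    (hN : ∀ x y : g, ⁅N x, N y⁆ = N (⁅N x, y⁆ + ⁅x, N y⁆ - N ⁅x, y⁆))
    (hU : ∀ a b : e, ⁅U a, U b⁆ = U (⁅U a, b⁆ + ⁅a, U b⁆ - U ⁅a, b⁆))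
    (i : h →ₗ[k] e) (p : e →ₗ[k] g)
    (hi : ∀ a b : h, i ⁅a, b⁆ = ⁅i a, i b⁆)
    (hp : ∀ a b : e, p ⁅a, b⁆ = ⁅p a, p b⁆)
    (hiInj : Function.Injective i)
    (hexact : LinearMap.range i = LinearMap.ker p)
    (hUi : ∀ a : h, U (i a) = i (S a))
    (hpU : ∀ a : e, p (U a) = N (p a))
    (s : g →ₗ[k] e) (hs : ∀ x : g, p (s x) = x) :
    ∃ (χ : g → g → h) (ψ : g → h → h) (F : g → h),
      -- χ, ψ, F are the lifts to h of the indicated maps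
      (∀ x y : g, i (χ x y) = ⁅s x, s y⁆ - s ⁅x, y⁆) ∧
      (∀ (x : g) (a : h), i (ψ x a) = ⁅s x, i a⁆) ∧
      (∀ x : g, i (F x) = U (s x) - s (N x)) ∧
      -- each ψ_x is a Lie algebra derivation of h
      (∀ (x : g) (a b : h), ψ x ⁅a, b⁆ = ⁅ψ x a, b⁆ + ⁅a, ψ x b⁆) ∧
      -- (nc1)
      (∀ (x y : g) (a : h), ψ x (ψ y a) - ψ y (ψ x a) - ψ ⁅x, y⁆ a = ⁅χ x y, a⁆) ∧
      -- (nc2)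
      (∀ x y z : g, ψ x (χ y z) + ψ y (χ z x) + ψ z (χ x y)
          - χ ⁅x, y⁆ z - χ ⁅y, z⁆ x - χ ⁅z, x⁆ y = 0) ∧
      -- (nc3)
      (∀ (x : g) (a : h), ψ (N x) (S a)
          = S (ψ (N x) a + ψ x (S a) - S (ψ x a)) + S ⁅F x, a⁆ - ⁅F x, S a⁆) ∧
      -- (nc4)
      (∀ x y : g, χ (N x) (N y) - S (χ (N x) y + χ x (N y) - S (χ x y))
          - F (⁅N x, y⁆ + ⁅x, N y⁆ - N ⁅x, y⁆)
          + ψ (N x) (F y) - ψ (N y) (F x)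
          - S (ψ x (F y) - ψ y (F x) - F ⁅x, y⁆) + ⁅F x, F y⁆ = 0) := by
  have lift {z : e} (hz : z ∈ LinearMap.ker p) : ∃ a, i a = z :=
    LinearMap.mem_range.mp (hexact ▸ hz)
  have hpi (a : h) : p (i a) = 0 := LinearMap.mem_ker.mp (hexact ▸ LinearMap.mem_range_self i a)
  choose χ hχ using fun x y ↦
    lift (z := s.lieCurvature x y) (by simp [LinearMap.lieCurvature, hp, hs])
  choose ψ hψ using fun x a ↦ lift (z := ⁅s x, i a⁆) (by simp [hp, hpi])
  choose F hF using fun x ↦ lift (z := U (s x) - s (N x)) (by simp [hpU, hs])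
  refine ⟨χ, ψ, F, hχ, hψ, hF, fun x a b ↦ hiInj ?_, fun x y a ↦ hiInj ?_,
    fun x y z ↦ hiInj ?_, fun x a ↦ hiInj ?_, fun x y ↦ hiInj ?_⟩ <;>
    simp only [map_add, map_sub, map_zero, hi, hχ, hψ, hF, ← hUi]
  · exact leibniz_lie _ _ _
  · rw [LinearMap.lieCurvature, sub_lie, lie_lie]
  · exact s.lieCurvature_cyclic x y z
  · simpa only [map_add, map_sub] using
      LinearMap.IsNijenhuis.lie_map_right_eq hU (s x) (s (N x)) (i a)
  · have nc4 := LinearMap.IsNijenhuis.lieCurvature_cocycle hN hU s x y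
    simp only [LinearMap.sub_apply, LinearMap.comp_apply] at nc4
    simpa only [map_add, map_sub] using nc4

/-- Given a non-abelian extension
`0 → (h,S) →ⁱ (e,U) →ᵖ (g,N) → 0` of Nijenhuis Lie algebras and a section `s` of `p`,
the maps `χ(x,y) = [s x, s y] - s[x,y]`, `ψ_x = [s x, -]` and `F = U∘s - s∘N` take
values in `h` (i.e. lift along the injection `i`), each `ψ_x` restricts to a derivation
of `h`, and the triple `(χ, ψ, F)` is a non-abelian 2-cocycle (identities (nc1)-(nc4)). -/
theorem stmt_1 {k g h e : Type*} [Field k]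
    [LieRing g] [LieAlgebra k g] [LieRing h] [LieAlgebra k h]
    [LieRing e] [LieAlgebra k e]
    (N : g →ₗ[k] g) (S : h →ₗ[k] h) (U : e →ₗ[k] e)
    (hN : ∀ x y : g, ⁅N x, N y⁆ = N (⁅N x, y⁆ + ⁅x, N y⁆ - N ⁅x, y⁆))
    (hS : ∀ a b : h, ⁅S a, S b⁆ = S (⁅S a, b⁆ + ⁅a, S b⁆ - S ⁅a, b⁆))
    (hU : ∀ a b : e, ⁅U a, U b⁆ = U (⁅U a, b⁆ + ⁅a, U b⁆ - U ⁅a, b⁆))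
    (i : h →ₗ[k] e) (p : e →ₗ[k] g)
    (hi : ∀ a b : h, i ⁅a, b⁆ = ⁅i a, i b⁆)
    (hp : ∀ a b : e, p ⁅a, b⁆ = ⁅p a, p b⁆)
    (hiInj : Function.Injective i) (hpSurj : Function.Surjective p)
    (hexact : LinearMap.range i = LinearMap.ker p)
    (hUi : ∀ a : h, U (i a) = i (S a))
    (hpU : ∀ a : e, p (U a) = N (p a))
    (s : g →ₗ[k] e) (hs : ∀ x : g, p (s x) = x) :
    ∃ (χ : g → g → h) (ψ : g → h → h) (F : g → h),
      -- χ, ψ, F are the lifts to h of the indicated maps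
      (∀ x y : g, i (χ x y) = ⁅s x, s y⁆ - s ⁅x, y⁆) ∧
      (∀ (x : g) (a : h), i (ψ x a) = ⁅s x, i a⁆) ∧
      (∀ x : g, i (F x) = U (s x) - s (N x)) ∧
      -- each ψ_x is a Lie algebra derivation of h
      (∀ (x : g) (a b : h), ψ x ⁅a, b⁆ = ⁅ψ x a, b⁆ + ⁅a, ψ x b⁆) ∧
      -- (nc1)
      (∀ (x y : g) (a : h), ψ x (ψ y a) - ψ y (ψ x a) - ψ ⁅x, y⁆ a = ⁅χ x y, a⁆) ∧
      -- (nc2)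
      (∀ x y z : g, ψ x (χ y z) + ψ y (χ z x) + ψ z (χ x y)
          - χ ⁅x, y⁆ z - χ ⁅y, z⁆ x - χ ⁅z, x⁆ y = 0) ∧
      -- (nc3)
      (∀ (x : g) (a : h), ψ (N x) (S a)
          = S (ψ (N x) a + ψ x (S a) - S (ψ x a)) + S ⁅F x, a⁆ - ⁅F x, S a⁆) ∧
      -- (nc4)
      (∀ x y : g, χ (N x) (N y) - S (χ (N x) y + χ x (N y) - S (χ x y))
          - F (⁅N x, y⁆ + ⁅x, N y⁆ - N ⁅x, y⁆)
          + ψ (N x) (F y) - ψ (N y) (F x)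
          - S (ψ x (F y) - ψ y (F x) - F ⁅x, y⁆) + ⁅F x, F y⁆ = 0) :=
  stmt_1_general N S U hN hU i p hi hp hiInj hexact hUi hpU s hs
end

section
/- Let 0 → (h, [·,·]_h, S) →ⁱ (e, [·,·]_e, U) →ᵖ (g, [·,·]_g, N) → 0 be a non-abelian extension of Nijenhuis Lie algebras, and let s and s̃ be two sections of p with associated non-abelian 2-cocycles (χ, ψ, F) and (χ̃, ψ̃, F̃). Then φ := s − s̃ takes values in h and (χ, ψ, F) and (χ̃, ψ̃, F̃) are equivalent via φ; that is, for all x, y ∈ g, h ∈ h: ψ_x h − ψ̃_x h = [φ x, h]_h; χ(x,y) − χ̃(x,y) = ψ̃_x(φ y) − ψ̃_y(φ x) − φ([x,y]_g) + [φ x, φ y]_h; and F x − F̃ x = S(φ x) − φ(N x). -/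
/-!
Both sections lift the identity of `g`, so `s x - s̃ x` lies in `ker p = im i` and defines
`φ x ∈ h`. Writing `s = s̃ + i ∘ φ`, each component of the cocycle of `s` expands, by
bilinearity of the bracket and `U ∘ i = i ∘ S`, into the component of `s̃` plus the correction
terms; injectivity of `i` transports these identities from `e` back to `h`.
-/

theorem LinearMap.exists_eq_sub_of_range_eq_ker {R M N P : Type*} [Ring R]
    [AddCommGroup M] [Module R M] [AddCommGroup N] [Module R N] [AddCommGroup P] [Module R P]
    {i : M →ₗ[R] N} {p : N →ₗ[R] P} (hexact : LinearMap.range i = LinearMap.ker p)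
    {u v : N} (huv : p u = p v) : ∃ a : M, i a = u - v := by
  have : u - v ∈ LinearMap.ker p := by simp [huv]
  rwa [← hexact] at this

theorem add_lie_add {L : Type*} [LieRing L] (a b c d : L) :
    ⁅a + c, b + d⁆ = ⁅a, b⁆ + ⁅a, d⁆ - ⁅b, c⁆ + ⁅c, d⁆ := by
  rw [add_lie, lie_add, lie_add, ← lie_skew b c]
  abel

theorem stmt_2_general {k g h e : Type*} [Field k]
    [LieRing g] [LieAlgebra k g] [LieRing h] [LieAlgebra k h]
    [LieRing e] [LieAlgebra k e]
    (N : g →ₗ[k] g) (S : h →ₗ[k] h) (U : e →ₗ[k] e)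
    (i : h →ₗ[k] e) (p : e →ₗ[k] g)
    (hi : ∀ a b : h, i ⁅a, b⁆ = ⁅i a, i b⁆)
    (hiInj : Function.Injective i)
    (hexact : LinearMap.range i = LinearMap.ker p)
    (hUi : ∀ a : h, U (i a) = i (S a))
    -- two sections of p
    (s st : g →ₗ[k] e) (hs : ∀ x : g, p (s x) = x) (hst : ∀ x : g, p (st x) = x)
    -- the non-abelian 2-cocycle associated to s
    (χ : g → g → h) (ψ : g → h → h) (F : g → h)
    (hχ : ∀ x y : g, i (χ x y) = ⁅s x, s y⁆ - s ⁅x, y⁆)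
    (hψ : ∀ (x : g) (a : h), i (ψ x a) = ⁅s x, i a⁆)
    (hF : ∀ x : g, i (F x) = U (s x) - s (N x))
    -- the non-abelian 2-cocycle associated to s̃
    (χt : g → g → h) (ψt : g → h → h) (Ft : g → h)
    (hχt : ∀ x y : g, i (χt x y) = ⁅st x, st y⁆ - st ⁅x, y⁆)
    (hψt : ∀ (x : g) (a : h), i (ψt x a) = ⁅st x, i a⁆)
    (hFt : ∀ x : g, i (Ft x) = U (st x) - st (N x)) :
    ∃ φ : g → h,
      -- φ is the lift to h of s - s̃
      (∀ x : g, i (φ x) = s x - st x) ∧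
      -- the two cocycles are equivalent via φ
      (∀ (x : g) (a : h), ψ x a - ψt x a = ⁅φ x, a⁆) ∧
      (∀ x y : g, χ x y - χt x y
          = ψt x (φ y) - ψt y (φ x) - φ ⁅x, y⁆ + ⁅φ x, φ y⁆) ∧
      (∀ x : g, F x - Ft x = S (φ x) - φ (N x)) := by
  choose φ hφ using fun x ↦
    LinearMap.exists_eq_sub_of_range_eq_ker hexact ((hs x).trans (hst x).symm)
  have hs_eq : ∀ x, s x = st x + i (φ x) := fun x ↦ by rw [hφ]; abel
  refine ⟨φ, hφ, fun x a ↦ hiInj ?_, fun x y ↦ hiInj ?_, fun x ↦ hiInj ?_⟩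
  · rw [map_sub, hψ, hψt, ← sub_lie, ← hφ, hi]
  · rw [map_sub, hχ, hχt, map_add, map_sub, map_sub, hψt, hψt, hi, hs_eq, hs_eq, hs_eq,
      add_lie_add]
    abel
  · rw [map_sub, hF, hFt, map_sub, hs_eq, hs_eq, map_add, hUi]
    abel

/-- If `s` and `s̃` are two sections of a non-abelian extension of
Nijenhuis Lie algebras, with associated non-abelian 2-cocycles `(χ, ψ, F)` and
`(χ̃, ψ̃, F̃)` (given here as lifts along `i`), then `φ := s - s̃` takes values in `h`
and the two cocycles are equivalent via `φ`. -/
theorem stmt_2 {k g h e : Type*} [Field k]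
    [LieRing g] [LieAlgebra k g] [LieRing h] [LieAlgebra k h]
    [LieRing e] [LieAlgebra k e]
    (N : g →ₗ[k] g) (S : h →ₗ[k] h) (U : e →ₗ[k] e)
    (hN : ∀ x y : g, ⁅N x, N y⁆ = N (⁅N x, y⁆ + ⁅x, N y⁆ - N ⁅x, y⁆))
    (hS : ∀ a b : h, ⁅S a, S b⁆ = S (⁅S a, b⁆ + ⁅a, S b⁆ - S ⁅a, b⁆))
    (hU : ∀ a b : e, ⁅U a, U b⁆ = U (⁅U a, b⁆ + ⁅a, U b⁆ - U ⁅a, b⁆))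
    (i : h →ₗ[k] e) (p : e →ₗ[k] g)
    (hi : ∀ a b : h, i ⁅a, b⁆ = ⁅i a, i b⁆)
    (hp : ∀ a b : e, p ⁅a, b⁆ = ⁅p a, p b⁆)
    (hiInj : Function.Injective i) (hpSurj : Function.Surjective p)
    (hexact : LinearMap.range i = LinearMap.ker p)
    (hUi : ∀ a : h, U (i a) = i (S a))
    (hpU : ∀ a : e, p (U a) = N (p a))
    -- two sections of p
    (s st : g →ₗ[k] e) (hs : ∀ x : g, p (s x) = x) (hst : ∀ x : g, p (st x) = x)
    -- the non-abelian 2-cocycle associated to s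
    (χ : g → g → h) (ψ : g → h → h) (F : g → h)
    (hχ : ∀ x y : g, i (χ x y) = ⁅s x, s y⁆ - s ⁅x, y⁆)
    (hψ : ∀ (x : g) (a : h), i (ψ x a) = ⁅s x, i a⁆)
    (hF : ∀ x : g, i (F x) = U (s x) - s (N x))
    -- the non-abelian 2-cocycle associated to s̃
    (χt : g → g → h) (ψt : g → h → h) (Ft : g → h)
    (hχt : ∀ x y : g, i (χt x y) = ⁅st x, st y⁆ - st ⁅x, y⁆)
    (hψt : ∀ (x : g) (a : h), i (ψt x a) = ⁅st x, i a⁆)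
    (hFt : ∀ x : g, i (Ft x) = U (st x) - st (N x)) :
    ∃ φ : g → h,
      -- φ is the lift to h of s - s̃
      (∀ x : g, i (φ x) = s x - st x) ∧
      -- the two cocycles are equivalent via φ
      (∀ (x : g) (a : h), ψ x a - ψt x a = ⁅φ x, a⁆) ∧
      (∀ x y : g, χ x y - χt x y
          = ψt x (φ y) - ψt y (φ x) - φ ⁅x, y⁆ + ⁅φ x, φ y⁆) ∧
      (∀ x : g, F x - Ft x = S (φ x) - φ (N x)) :=
  stmt_2_general N S U i p hi hiInj hexact hUi s st hs hst χ ψ F hχ hψ hF χt ψt Ft hχt hψt hFt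
end

section
/- Let (χ, ψ, F) be a non-abelian 2-cocycle of a Nijenhuis Lie algebra (g, [·,·]_g, N) with values in a Nijenhuis Lie algebra (h, [·,·]_h, S). Then the skew-symmetric bracket [(x,h), (y,k)]_{χ,ψ} := ([x,y]_g, ψ_x k − ψ_y h + χ(x,y) + [h,k]_h) is a Lie bracket on g ⊕ h, and the linear map U_F(x,h) := (N x, S h + F x) is a Nijenhuis operator on (g ⊕ h, [·,·]_{χ,ψ}); moreover, with the inclusion of h and projection onto g, this is a non-abelian extension of (g, N) by (h, S). -/
/-- A non-abelian 2-cocycle of the Nijenhuis Lie algebra `(g, N)` with values in the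
Nijenhuis Lie algebra `(h, S)`: linear maps `χ : Λ²g → h`, `ψ : g → Der(h)`,
`F : g → h` satisfying identities (nc1)-(nc4). -/
def IsNijNonabelian2Cocycle (k : Type*) {g h : Type*} [Field k]
    [LieRing g] [LieAlgebra k g] [LieRing h] [LieAlgebra k h]
    (N : g → g) (S : h → h) (χ : g → g → h) (ψ : g → h → h) (F : g → h) : Prop :=
  (∀ x : g, IsLinearMap k (χ x)) ∧ (∀ y : g, IsLinearMap k (fun x => χ x y)) ∧
  (∀ x : g, IsLinearMap k (ψ x)) ∧ (∀ a : h, IsLinearMap k (fun x => ψ x a)) ∧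
  IsLinearMap k F ∧
  (∀ x : g, χ x x = 0) ∧
  (∀ (x : g) (a b : h), ψ x ⁅a, b⁆ = ⁅ψ x a, b⁆ + ⁅a, ψ x b⁆) ∧
  (∀ (x y : g) (a : h), ψ x (ψ y a) - ψ y (ψ x a) - ψ ⁅x, y⁆ a = ⁅χ x y, a⁆) ∧
  (∀ x y z : g, ψ x (χ y z) + ψ y (χ z x) + ψ z (χ x y)
      - χ ⁅x, y⁆ z - χ ⁅y, z⁆ x - χ ⁅z, x⁆ y = 0) ∧
  (∀ (x : g) (a : h), ψ (N x) (S a)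
      = S (ψ (N x) a + ψ x (S a) - S (ψ x a)) + S ⁅F x, a⁆ - ⁅F x, S a⁆) ∧
  (∀ x y : g, χ (N x) (N y) - S (χ (N x) y + χ x (N y) - S (χ x y))
      - F (⁅N x, y⁆ + ⁅x, N y⁆ - N ⁅x, y⁆)
      + ψ (N x) (F y) - ψ (N y) (F x)
      - S (ψ x (F y) - ψ y (F x) - F ⁅x, y⁆) + ⁅F x, F y⁆ = 0)

/-! In the twisted bracket the Jacobi identity, and for `U_F` the Nijenhuis identity, only need
checking in the `h`-component, where they are linear combinations of the cocycle identities: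
for Jacobi, (nc1) in each cyclic pair, (nc2) and the Jacobi identity of `h`; for Nijenhuis,
(nc3) for each argument, the Nijenhuis identity of `S` and (nc4). The remaining terms cancel in
pairs by skew-symmetry. -/

section TwistedExtension

variable {R g h : Type*} [CommRing R] [LieRing g] [LieAlgebra R g] [LieRing h] [LieAlgebra R h]

def twistedBracket (χ : g →ₗ[R] g →ₗ[R] h) (ψ : g →ₗ[R] h →ₗ[R] h) (a b : g × h) : g × h :=
  (⁅a.1, b.1⁆, ψ a.1 b.2 - ψ b.1 a.2 + χ a.1 b.1 + ⁅a.2, b.2⁆)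

def twistedOperator (N : g →ₗ[R] g) (S : h →ₗ[R] h) (F : g →ₗ[R] h) (a : g × h) : g × h :=
  (N a.1, S a.2 + F a.1)

def IsNijenhuis {M : Type*} [AddCommGroup M] (B : M → M → M) (N : M → M) : Prop :=
  ∀ x y, B (N x) (N y) = N (B (N x) y + B x (N y) - N (B x y))

variable (χ : g →ₗ[R] g →ₗ[R] h) (ψ : g →ₗ[R] h →ₗ[R] h)

theorem twistedBracket_add_left (a b c : g × h) :
    twistedBracket χ ψ (a + b) c = twistedBracket χ ψ a c + twistedBracket χ ψ b c := by
  ext <;> simp only [twistedBracket, Prod.fst_add, Prod.snd_add, add_lie, map_add,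
    LinearMap.add_apply]
  abel

theorem twistedBracket_add_right (a b c : g × h) :
    twistedBracket χ ψ a (b + c) = twistedBracket χ ψ a b + twistedBracket χ ψ a c := by
  ext <;> simp only [twistedBracket, Prod.fst_add, Prod.snd_add, lie_add, map_add,
    LinearMap.add_apply]
  abel

theorem twistedBracket_smul_left (t : R) (a b : g × h) :
    twistedBracket χ ψ (t • a) b = t • twistedBracket χ ψ a b := by
  ext <;> simp only [twistedBracket, Prod.smul_fst, Prod.smul_snd, smul_lie, map_smul,
    LinearMap.smul_apply, smul_add, smul_sub]

theorem twistedBracket_smul_right (t : R) (a b : g × h) :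
    twistedBracket χ ψ a (t • b) = t • twistedBracket χ ψ a b := by
  ext <;> simp only [twistedBracket, Prod.smul_fst, Prod.smul_snd, lie_smul, map_smul,
    LinearMap.smul_apply, smul_add, smul_sub]

theorem twistedBracket_self (hχ : χ.IsAlt) (a : g × h) : twistedBracket χ ψ a a = 0 := by
  ext <;> simp [twistedBracket, hχ.self_eq_zero]

theorem twistedBracket_jacobi (hχ : χ.IsAlt)
    (hψ : ∀ x a b, ψ x ⁅a, b⁆ = ⁅ψ x a, b⁆ + ⁅a, ψ x b⁆)
    (nc1 : ∀ x y a, ψ x (ψ y a) - ψ y (ψ x a) - ψ ⁅x, y⁆ a = ⁅χ x y, a⁆)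
    (nc2 : ∀ x y z, ψ x (χ y z) + ψ y (χ z x) + ψ z (χ x y)
      - χ ⁅x, y⁆ z - χ ⁅y, z⁆ x - χ ⁅z, x⁆ y = 0)
    (a b c : g × h) :
    twistedBracket χ ψ a (twistedBracket χ ψ b c) + twistedBracket χ ψ b (twistedBracket χ ψ c a)
      + twistedBracket χ ψ c (twistedBracket χ ψ a b) = 0 := by
  obtain ⟨x, a⟩ := a
  obtain ⟨y, b⟩ := b
  obtain ⟨z, c⟩ := c
  ext
  · simpa [twistedBracket] using lie_jacobi x y z
  · simp only [twistedBracket, Prod.snd_add, Prod.snd_zero, map_add, map_sub, lie_add, lie_sub,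
      hψ]
    linear_combination (norm := module) nc1 x y c + nc1 y z a + nc1 z x b + nc2 x y z
      + lie_jacobi a b c - hχ.neg x ⁅y, z⁆ - hχ.neg y ⁅z, x⁆ - hχ.neg z ⁅x, y⁆
      - lie_skew c (χ x y) - lie_skew a (χ y z) - lie_skew b (χ z x)
      - lie_skew (ψ x b) c - lie_skew (ψ y c) a - lie_skew (ψ z a) b

theorem isNijenhuis_twistedOperator (N : g →ₗ[R] g) (S : h →ₗ[R] h) (F : g →ₗ[R] h)
    (hN : IsNijenhuis (fun x y : g => ⁅x, y⁆) N) (hS : IsNijenhuis (fun a b : h => ⁅a, b⁆) S)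
    (nc3 : ∀ x a, ψ (N x) (S a)
      = S (ψ (N x) a + ψ x (S a) - S (ψ x a)) + S ⁅F x, a⁆ - ⁅F x, S a⁆)
    (nc4 : ∀ x y, χ (N x) (N y) - S (χ (N x) y + χ x (N y) - S (χ x y))
      - F (⁅N x, y⁆ + ⁅x, N y⁆ - N ⁅x, y⁆) + ψ (N x) (F y) - ψ (N y) (F x)
      - S (ψ x (F y) - ψ y (F x) - F ⁅x, y⁆) + ⁅F x, F y⁆ = 0) :
    IsNijenhuis (twistedBracket χ ψ) (twistedOperator N S F) := by
  rintro ⟨x, a⟩ ⟨y, b⟩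
  ext
  · exact hN x y
  · have h3a := nc3 y a
    have h3b := nc3 x b
    have hSab := hS a b
    have h4 := nc4 x y
    have hSskew : S ⁅a, F y⁆ = -S ⁅F y, a⁆ := by rw [← map_neg, lie_skew]
    simp only [map_add, map_sub] at h3a h3b hSab h4
    simp only [twistedBracket, twistedOperator, Prod.fst_add, Prod.snd_add, Prod.fst_sub,
      Prod.snd_sub, map_add, map_sub, lie_add, add_lie]
    linear_combination (norm := module) h3b - h3a + hSab + h4 - lie_skew (S a) (F y) - hSskew

theorem twistedBracket_zero_fst (a b : h) :
    twistedBracket χ ψ ((0 : g), a) (0, b) = (0, ⁅a, b⁆) := by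
  ext <;> simp [twistedBracket]

theorem twistedOperator_zero_fst (N : g →ₗ[R] g) (S : h →ₗ[R] h) (F : g →ₗ[R] h) (a : h) :
    twistedOperator N S F (0, a) = (0, S a) := by
  ext <;> simp [twistedOperator]

end TwistedExtension

/-- A non-abelian 2-cocycle `(χ, ψ, F)` gives a Lie bracket
`[(x,h),(y,k)] = ([x,y], ψ x k - ψ y h + χ x y + [h,k])` on `g ⊕ h` for which
`U_F(x,h) = (N x, S h + F x)` is a Nijenhuis operator; together with the inclusion
of `h` and the projection to `g` it is a non-abelian extension of `(g,N)` by `(h,S)`. -/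
theorem stmt_3 {k g h : Type*} [Field k]
    [LieRing g] [LieAlgebra k g] [LieRing h] [LieAlgebra k h]
    (N : g →ₗ[k] g) (S : h →ₗ[k] h)
    (hN : ∀ x y : g, ⁅N x, N y⁆ = N (⁅N x, y⁆ + ⁅x, N y⁆ - N ⁅x, y⁆))
    (hS : ∀ a b : h, ⁅S a, S b⁆ = S (⁅S a, b⁆ + ⁅a, S b⁆ - S ⁅a, b⁆))
    (χ : g → g → h) (ψ : g → h → h) (F : g → h)
    (hc : IsNijNonabelian2Cocycle k (⇑N) (⇑S) χ ψ F) :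
    ∀ br : g × h → g × h → g × h,
      br = (fun a b => (⁅a.1, b.1⁆, ψ a.1 b.2 - ψ b.1 a.2 + χ a.1 b.1 + ⁅a.2, b.2⁆)) →
    ∀ UF : g × h → g × h, UF = (fun a => (N a.1, S a.2 + F a.1)) →
    ∀ inc : h → g × h, inc = (fun a => ((0 : g), a)) →
    ∀ pr : g × h → g, pr = (fun a => a.1) →
      -- br is a bilinear bracket
      (∀ a b c : g × h, br (a + b) c = br a c + br b c) ∧
      (∀ a b c : g × h, br a (b + c) = br a b + br a c) ∧
      (∀ (t : k) (a b : g × h), br (t • a) b = t • br a b) ∧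
      (∀ (t : k) (a b : g × h), br a (t • b) = t • br a b) ∧
      -- br is alternating and satisfies the Jacobi identity
      (∀ a : g × h, br a a = 0) ∧
      (∀ a b c : g × h, br a (br b c) + br b (br c a) + br c (br a b) = 0) ∧
      -- U_F is a Nijenhuis operator for br
      (∀ a b : g × h, br (UF a) (UF b)
        = UF (br (UF a) b + br a (UF b) - UF (br a b))) ∧
      -- the inclusion of h is a morphism intertwining S and U_F
      (∀ a b : h, br (inc a) (inc b) = inc ⁅a, b⁆) ∧
      (∀ a : h, UF (inc a) = inc (S a)) ∧
      Function.Injective inc ∧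
      -- the projection onto g is a morphism intertwining U_F and N
      (∀ a b : g × h, pr (br a b) = ⁅pr a, pr b⁆) ∧
      (∀ a : g × h, pr (UF a) = N (pr a)) ∧
      Function.Surjective pr ∧
      -- exactness: the image of the inclusion is the kernel of the projection
      (∀ z : g × h, pr z = 0 ↔ ∃ a : h, z = inc a) := by
  obtain ⟨hχl, hχr, hψl, hψr, hF, hχ, hψ, nc1, nc2, nc3, nc4⟩ := hc
  let χₗ : g →ₗ[k] g →ₗ[k] h := LinearMap.mk₂ k χ (fun _ _ y => (hχr y).map_add _ _)
    (fun _ _ y => (hχr y).map_smul _ _) (fun x _ _ => (hχl x).map_add _ _)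
    (fun _ x _ => (hχl x).map_smul _ _)
  let ψₗ : g →ₗ[k] h →ₗ[k] h := LinearMap.mk₂ k ψ (fun _ _ a => (hψr a).map_add _ _)
    (fun _ _ a => (hψr a).map_smul _ _) (fun x _ _ => (hψl x).map_add _ _)
    (fun _ x _ => (hψl x).map_smul _ _)
  let Fₗ : g →ₗ[k] h := IsLinearMap.mk' F hF
  rintro br rfl UF rfl inc rfl pr rfl
  exact ⟨twistedBracket_add_left χₗ ψₗ, twistedBracket_add_right χₗ ψₗ,
    twistedBracket_smul_left χₗ ψₗ, twistedBracket_smul_right χₗ ψₗ,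
    twistedBracket_self χₗ ψₗ hχ, twistedBracket_jacobi χₗ ψₗ hχ hψ nc1 nc2,
    isNijenhuis_twistedOperator χₗ ψₗ N S Fₗ hN hS nc3 nc4,
    twistedBracket_zero_fst χₗ ψₗ, twistedOperator_zero_fst N S Fₗ,
    fun _ _ => congrArg Prod.snd, fun _ _ => rfl, fun _ => rfl, fun x => ⟨(x, 0), rfl⟩,
    fun z => ⟨fun hz => ⟨z.2, Prod.ext hz rfl⟩, by rintro ⟨a, rfl⟩; rfl⟩⟩
end

section
/- Let (χ, ψ, F) and (χ', ψ', F') be two non-abelian 2-cocycles of a Nijenhuis Lie algebra (g, [·,·]_g, N) with values in a Nijenhuis Lie algebra (h, [·,·]_h, S) that are equivalent via a linear map φ : g → h. Then the linear bijection Φ : g ⊕ h → g ⊕ h, Φ(x,h) := (x, φ x + h), satisfies Φ([(x,h),(y,k)]_{χ,ψ}) = [Φ(x,h), Φ(y,k)]_{χ',ψ'} and U_{F'} ∘ Φ = Φ ∘ U_F; hence Φ is an isomorphism of the corresponding non-abelian extensions (it restricts to the identity on h and covers the identity on g). -/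
/-!
An equivalence `φ` of cocycles says exactly that the shear `(x, a) ↦ (x, φ x + a)` of `g × h`
carries the data `(χ, ψ, F)` to `(χ', ψ', F')`: expanding both sides of the intertwining
identities, the `g`-components agree trivially and the `h`-components differ by the three
defining equations of the equivalence, once `ψ'_x` is known to be additive.
-/

section Extension

variable {g h : Type*}

def extBracket [LieRing g] [LieRing h] (ψ : g → h → h) (χ : g → g → h) (a b : g × h) : g × h :=
  (⁅a.1, b.1⁆, ψ a.1 b.2 - ψ b.1 a.2 + χ a.1 b.1 + ⁅a.2, b.2⁆)

def extOperator [Add h] (N : g → g) (S : h → h) (F : g → h) (z : g × h) : g × h :=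
  (N z.1, S z.2 + F z.1)

def shearEquiv [AddGroup h] (φ : g → h) : g × h ≃ g × h :=
  Equiv.prodShear (Equiv.refl g) fun x => Equiv.addLeft (φ x)

@[simp]
theorem shearEquiv_apply [AddGroup h] (φ : g → h) (z : g × h) :
    shearEquiv φ z = (z.1, φ z.1 + z.2) :=
  rfl

theorem shearEquiv_extBracket [LieRing g] [LieRing h] {ψ ψ' : g → h → h} {χ χ' : g → g → h}
    {φ : g → h} (hψ' : ∀ (x : g) (a b : h), ψ' x (a + b) = ψ' x a + ψ' x b)
    (hψ : ∀ (x : g) (a : h), ψ x a - ψ' x a = ⁅φ x, a⁆)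
    (hχ : ∀ x y : g, χ x y - χ' x y = ψ' x (φ y) - ψ' y (φ x) - φ ⁅x, y⁆ + ⁅φ x, φ y⁆)
    (a b : g × h) :
    shearEquiv φ (extBracket ψ χ a b)
      = extBracket ψ' χ' (shearEquiv φ a) (shearEquiv φ b) := by
  obtain ⟨x, a⟩ := a
  obtain ⟨y, b⟩ := b
  have hψxb : ψ x b = ψ' x b + ⁅φ x, b⁆ := eq_add_of_sub_eq' (hψ x b)
  have hψya : ψ y a = ψ' y a - ⁅a, φ y⁆ := by
    rw [← lie_skew, sub_neg_eq_add]
    exact eq_add_of_sub_eq' (hψ y a)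
  have hχxy : χ x y = χ' x y + (ψ' x (φ y) - ψ' y (φ x) - φ ⁅x, y⁆ + ⁅φ x, φ y⁆) :=
    eq_add_of_sub_eq' (hχ x y)
  simp only [extBracket, shearEquiv_apply, Prod.mk.injEq, true_and]
  rw [hψxb, hψya, hχxy, hψ', hψ', lie_add, add_lie, add_lie]
  abel

theorem shearEquiv_extOperator [AddCommGroup h] (N : g → g) {S : h →+ h} {F F' : g → h}
    {φ : g → h} (hF : ∀ x : g, F x - F' x = S (φ x) - φ (N x)) (z : g × h) :
    extOperator N S F' (shearEquiv φ z) = shearEquiv φ (extOperator N S F z) := by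
  simp only [extOperator, shearEquiv_apply, Prod.mk.injEq, true_and, map_add]
  linear_combination (norm := abel) -hF z.1

end Extension

theorem stmt_4_general {k g h : Type*} [Field k]
    [LieRing g] [LieAlgebra k g] [LieRing h] [LieAlgebra k h]
    (N : g →ₗ[k] g) (S : h →ₗ[k] h)
    (χ χ' : g → g → h) (ψ ψ' : g → h → h) (F F' : g → h)
    (hc' : IsNijNonabelian2Cocycle k (⇑N) (⇑S) χ' ψ' F')
    -- the two cocycles are equivalent via the linear map φ
    (φ : g →ₗ[k] h)
    (heq1 : ∀ (x : g) (a : h), ψ x a - ψ' x a = ⁅φ x, a⁆)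
    (heq2 : ∀ x y : g, χ x y - χ' x y
        = ψ' x (φ y) - ψ' y (φ x) - φ ⁅x, y⁆ + ⁅φ x, φ y⁆)
    (heq3 : ∀ x : g, F x - F' x = S (φ x) - φ (N x)) :
    ∀ br : g × h → g × h → g × h,
      br = (fun a b => (⁅a.1, b.1⁆, ψ a.1 b.2 - ψ b.1 a.2 + χ a.1 b.1 + ⁅a.2, b.2⁆)) →
    ∀ br' : g × h → g × h → g × h,
      br' = (fun a b => (⁅a.1, b.1⁆, ψ' a.1 b.2 - ψ' b.1 a.2 + χ' a.1 b.1 + ⁅a.2, b.2⁆)) →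
    ∀ UF : g × h → g × h, UF = (fun a => (N a.1, S a.2 + F a.1)) →
    ∀ UF' : g × h → g × h, UF' = (fun a => (N a.1, S a.2 + F' a.1)) →
    ∀ Φ : g × h → g × h, Φ = (fun z => (z.1, φ z.1 + z.2)) →
      (∀ a b : g × h, Φ (br a b) = br' (Φ a) (Φ b)) ∧
      (∀ z : g × h, UF' (Φ z) = Φ (UF z)) ∧
      Function.Bijective Φ ∧
      (∀ a : h, Φ ((0 : g), a) = ((0 : g), a)) ∧
      (∀ z : g × h, (Φ z).1 = z.1) := by
  intro br hbr br' hbr' UF hUF UF' hUF' Φ hΦ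
  subst hbr hbr' hUF hUF' hΦ
  have hψ' (x : g) (a b : h) : ψ' x (a + b) = ψ' x a + ψ' x b := (hc'.2.2.1 x).map_add a b
  exact ⟨shearEquiv_extBracket hψ' heq1 heq2,
    shearEquiv_extOperator N (S := S.toAddMonoidHom) heq3,
    (shearEquiv φ).bijective, fun a => by simp, fun _ => rfl⟩

/-- If two non-abelian 2-cocycles `(χ, ψ, F)` and `(χ', ψ', F')` are
equivalent via a linear map `φ : g → h`, then `Φ(x,h) = (x, φ x + h)` intertwines
the brackets `[·,·]_{χ,ψ}` and `[·,·]_{χ',ψ'}` and the operators `U_F` and `U_{F'}`;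
it is bijective, restricts to the identity on `h` and covers the identity on `g`,
hence is an isomorphism of the corresponding non-abelian extensions. -/
theorem stmt_4 {k g h : Type*} [Field k]
    [LieRing g] [LieAlgebra k g] [LieRing h] [LieAlgebra k h]
    (N : g →ₗ[k] g) (S : h →ₗ[k] h)
    (hN : ∀ x y : g, ⁅N x, N y⁆ = N (⁅N x, y⁆ + ⁅x, N y⁆ - N ⁅x, y⁆))
    (hS : ∀ a b : h, ⁅S a, S b⁆ = S (⁅S a, b⁆ + ⁅a, S b⁆ - S ⁅a, b⁆))
    (χ χ' : g → g → h) (ψ ψ' : g → h → h) (F F' : g → h)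
    (hc : IsNijNonabelian2Cocycle k (⇑N) (⇑S) χ ψ F)
    (hc' : IsNijNonabelian2Cocycle k (⇑N) (⇑S) χ' ψ' F')
    -- the two cocycles are equivalent via the linear map φ
    (φ : g →ₗ[k] h)
    (heq1 : ∀ (x : g) (a : h), ψ x a - ψ' x a = ⁅φ x, a⁆)
    (heq2 : ∀ x y : g, χ x y - χ' x y
        = ψ' x (φ y) - ψ' y (φ x) - φ ⁅x, y⁆ + ⁅φ x, φ y⁆)
    (heq3 : ∀ x : g, F x - F' x = S (φ x) - φ (N x)) :
    ∀ br : g × h → g × h → g × h,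
      br = (fun a b => (⁅a.1, b.1⁆, ψ a.1 b.2 - ψ b.1 a.2 + χ a.1 b.1 + ⁅a.2, b.2⁆)) →
    ∀ br' : g × h → g × h → g × h,
      br' = (fun a b => (⁅a.1, b.1⁆, ψ' a.1 b.2 - ψ' b.1 a.2 + χ' a.1 b.1 + ⁅a.2, b.2⁆)) →
    ∀ UF : g × h → g × h, UF = (fun a => (N a.1, S a.2 + F a.1)) →
    ∀ UF' : g × h → g × h, UF' = (fun a => (N a.1, S a.2 + F' a.1)) →
    ∀ Φ : g × h → g × h, Φ = (fun z => (z.1, φ z.1 + z.2)) →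
      (∀ a b : g × h, Φ (br a b) = br' (Φ a) (Φ b)) ∧
      (∀ z : g × h, UF' (Φ z) = Φ (UF z)) ∧
      Function.Bijective Φ ∧
      (∀ a : h, Φ ((0 : g), a) = ((0 : g), a)) ∧
      (∀ z : g × h, (Φ z).1 = z.1) :=
  stmt_4_general N S χ χ' ψ ψ' F F' hc' φ heq1 heq2 heq3
end

section
/- Let 0 → (h,S) →ⁱ (e, [·,·]_e, U) →ᵖ (g,N) → 0 and 0 → (h,S) →ⁱ' (e', [·,·]_{e'}, U') →ᵖ' (g,N) → 0 be two non-abelian extensions of Nijenhuis Lie algebras and let Φ : e → e' be an isomorphism of these extensions (a Lie algebra isomorphism with Φ ∘ U = U' ∘ Φ, Φ|_h = id_h and p' ∘ Φ = p). If s is a section of p, then s' := Φ ∘ s is a section of p', and the non-abelian 2-cocycle (χ', ψ', F') associated to s' equals the non-abelian 2-cocycle (χ, ψ, F) associated to s. -/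
theorem funext_of_injective_of_comp_eq {A E E' ι : Type*}
    {i : A → E} {i' : A → E'} {Φ : E → E'}
    (hi' : Function.Injective i') (hΦi : ∀ a, Φ (i a) = i' a)
    {c c' : ι → A} (hc : ∀ x, i' (c' x) = Φ (i (c x))) : c' = c :=
  funext fun x => hi' (by rw [hc, hΦi])

theorem stmt_5_general {k g h e e' : Type*} [Field k]
    [LieRing g] [LieAlgebra k g] [LieRing h] [LieAlgebra k h]
    [LieRing e] [LieAlgebra k e] [LieRing e'] [LieAlgebra k e']
    (N : g →ₗ[k] g) (U : e →ₗ[k] e) (U' : e' →ₗ[k] e')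
    -- first extension
    (i : h →ₗ[k] e) (p : e →ₗ[k] g)
    -- second extension
    (i' : h →ₗ[k] e') (p' : e' →ₗ[k] g)
    (hiInj' : Function.Injective i')
    -- isomorphism of extensions
    (Φ : e →ₗ[k] e')
    (hΦLie : ∀ a b : e, Φ ⁅a, b⁆ = ⁅Φ a, Φ b⁆)
    (hΦU : ∀ a : e, Φ (U a) = U' (Φ a))
    (hΦi : ∀ a : h, Φ (i a) = i' a)
    (hΦp : ∀ a : e, p' (Φ a) = p a)
    -- a section s of p and its associated 2-cocycle
    (s : g →ₗ[k] e) (hs : ∀ x : g, p (s x) = x)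
    (χ : g → g → h) (ψ : g → h → h) (F : g → h)
    (hχ : ∀ x y : g, i (χ x y) = ⁅s x, s y⁆ - s ⁅x, y⁆)
    (hψ : ∀ (x : g) (a : h), i (ψ x a) = ⁅s x, i a⁆)
    (hF : ∀ x : g, i (F x) = U (s x) - s (N x))
    -- the 2-cocycle associated to s' = Φ ∘ s
    (χ' : g → g → h) (ψ' : g → h → h) (F' : g → h)
    (hχ' : ∀ x y : g, i' (χ' x y) = ⁅Φ (s x), Φ (s y)⁆ - Φ (s ⁅x, y⁆))
    (hψ' : ∀ (x : g) (a : h), i' (ψ' x a) = ⁅Φ (s x), i' a⁆)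
    (hF' : ∀ x : g, i' (F' x) = U' (Φ (s x)) - Φ (s (N x))) :
    -- s' = Φ ∘ s is a section of p', and the two cocycles coincide
    (∀ x : g, p' (Φ (s x)) = x) ∧ χ' = χ ∧ ψ' = ψ ∧ F' = F := by
  refine ⟨fun x => by rw [hΦp, hs], ?_, ?_, ?_⟩
  · funext x
    exact funext_of_injective_of_comp_eq hiInj' hΦi fun y => by rw [hχ', hχ, map_sub, hΦLie]
  · funext x
    exact funext_of_injective_of_comp_eq hiInj' hΦi fun a => by rw [hψ', hψ, hΦLie, hΦi]
  · exact funext_of_injective_of_comp_eq hiInj' hΦi fun x => by rw [hF', hF, map_sub, hΦU]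

/-- If `Φ : e → e'` is an isomorphism of non-abelian extensions of
Nijenhuis Lie algebras (a Lie algebra isomorphism commuting with the Nijenhuis
operators, restricting to the identity on `h` and covering the identity on `g`)
and `s` is a section of `p`, then `s' := Φ ∘ s` is a section of `p'`, and the
non-abelian 2-cocycle associated to `s'` equals the one associated to `s`. -/
theorem stmt_5 {k g h e e' : Type*} [Field k]
    [LieRing g] [LieAlgebra k g] [LieRing h] [LieAlgebra k h]
    [LieRing e] [LieAlgebra k e] [LieRing e'] [LieAlgebra k e']
    (N : g →ₗ[k] g) (S : h →ₗ[k] h) (U : e →ₗ[k] e) (U' : e' →ₗ[k] e')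
    (hN : ∀ x y : g, ⁅N x, N y⁆ = N (⁅N x, y⁆ + ⁅x, N y⁆ - N ⁅x, y⁆))
    (hS : ∀ a b : h, ⁅S a, S b⁆ = S (⁅S a, b⁆ + ⁅a, S b⁆ - S ⁅a, b⁆))
    (hU : ∀ a b : e, ⁅U a, U b⁆ = U (⁅U a, b⁆ + ⁅a, U b⁆ - U ⁅a, b⁆))
    (hU' : ∀ a b : e', ⁅U' a, U' b⁆ = U' (⁅U' a, b⁆ + ⁅a, U' b⁆ - U' ⁅a, b⁆))
    -- first extension
    (i : h →ₗ[k] e) (p : e →ₗ[k] g)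
    (hi : ∀ a b : h, i ⁅a, b⁆ = ⁅i a, i b⁆)
    (hp : ∀ a b : e, p ⁅a, b⁆ = ⁅p a, p b⁆)
    (hiInj : Function.Injective i) (hpSurj : Function.Surjective p)
    (hexact : LinearMap.range i = LinearMap.ker p)
    (hUi : ∀ a : h, U (i a) = i (S a))
    (hpU : ∀ a : e, p (U a) = N (p a))
    -- second extension
    (i' : h →ₗ[k] e') (p' : e' →ₗ[k] g)
    (hi' : ∀ a b : h, i' ⁅a, b⁆ = ⁅i' a, i' b⁆)
    (hp' : ∀ a b : e', p' ⁅a, b⁆ = ⁅p' a, p' b⁆)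
    (hiInj' : Function.Injective i') (hpSurj' : Function.Surjective p')
    (hexact' : LinearMap.range i' = LinearMap.ker p')
    (hUi' : ∀ a : h, U' (i' a) = i' (S a))
    (hpU' : ∀ a : e', p' (U' a) = N (p' a))
    -- isomorphism of extensions
    (Φ : e →ₗ[k] e')
    (hΦLie : ∀ a b : e, Φ ⁅a, b⁆ = ⁅Φ a, Φ b⁆)
    (hΦbij : Function.Bijective Φ)
    (hΦU : ∀ a : e, Φ (U a) = U' (Φ a))
    (hΦi : ∀ a : h, Φ (i a) = i' a)
    (hΦp : ∀ a : e, p' (Φ a) = p a)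
    -- a section s of p and its associated 2-cocycle
    (s : g →ₗ[k] e) (hs : ∀ x : g, p (s x) = x)
    (χ : g → g → h) (ψ : g → h → h) (F : g → h)
    (hχ : ∀ x y : g, i (χ x y) = ⁅s x, s y⁆ - s ⁅x, y⁆)
    (hψ : ∀ (x : g) (a : h), i (ψ x a) = ⁅s x, i a⁆)
    (hF : ∀ x : g, i (F x) = U (s x) - s (N x))
    -- the 2-cocycle associated to s' = Φ ∘ s
    (χ' : g → g → h) (ψ' : g → h → h) (F' : g → h)
    (hχ' : ∀ x y : g, i' (χ' x y) = ⁅Φ (s x), Φ (s y)⁆ - Φ (s ⁅x, y⁆))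
    (hψ' : ∀ (x : g) (a : h), i' (ψ' x a) = ⁅Φ (s x), i' a⁆)
    (hF' : ∀ x : g, i' (F' x) = U' (Φ (s x)) - Φ (s (N x))) :
    -- s' = Φ ∘ s is a section of p', and the two cocycles coincide
    (∀ x : g, p' (Φ (s x)) = x) ∧ χ' = χ ∧ ψ' = ψ ∧ F' = F :=
  stmt_5_general N U U' i p i' p' hiInj' Φ hΦLie hΦU hΦi hΦp s hs χ ψ F hχ hψ hF χ' ψ' F' hχ' hψ'
    hF'
end

section
/- Let 0 → (h, [·,·]_h, S) →ⁱ (e, [·,·]_e, U) →ᵖ (g, [·,·]_g, N) → 0 be a non-abelian extension of Nijenhuis Lie algebras, s a section of p, and (χ, ψ, F) the associated non-abelian 2-cocycle. Then a pair (β, α) ∈ Aut(h, S) × Aut(g, N) is inducible if and only if there exists a linear map λ : g → h satisfying, for all x, y ∈ g and h ∈ h: (1) β(ψ_x h) − ψ_{α x}(β h) = [λ x, β h]_h; (2) β(χ(x,y)) − χ(α x, α y) = ψ_{α x}(λ y) − ψ_{α y}(λ x) − λ([x,y]_g) + [λ x, λ y]_h; (3) β(F x) − F(α x) = S(λ x)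 − λ(N x). -/
/-!
Via the section `s`, `e = i(h) ⊕ s(g)` as a vector space, and the bracket and `U` of `e` are
expressed through `(χ, ψ, F)`. A linear `γ` with `γ ∘ i = i ∘ β` and `p ∘ γ ∘ s = α` has the
triangular form `γ (i u + s x) = i (β u + λ x) + s (α x)`, with `λ = r ∘ γ ∘ s` for the
retraction `r` of `i` determined by `s`; conversely every `λ` defines such a `γ`, which is
bijective. Checking on the generators `s x`, `i a`, such a `γ` preserves brackets iff (1) and (2)
hold, and commutes with `U` iff (3) holds.
-/

section Splitting

variable {R M N P : Type*} [Ring R] [AddCommGroup M] [AddCommGroup N] [AddCommGroup P]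
  [Module R M] [Module R N] [Module R P] {f : M →ₗ[R] N} {g : N →ₗ[R] P} {l : P →ₗ[R] N}

theorem Function.Exact.exists_retraction_of_section (hfg : Function.Exact f g)
    (hf : Function.Injective f) (hl : ∀ x, g (l x) = x) :
    ∃ r : N →ₗ[R] M, (∀ u, r (f u) = u) ∧ (∀ x, r (l x) = 0) ∧ ∀ a, f (r a) + l (g a) = a := by
  let q : N →ₗ[R] N := LinearMap.id - l ∘ₗ g
  have hq : ∀ a, q a ∈ LinearMap.range f := fun a => (hfg _).mp (by simp [q, hl])
  let r := (LinearEquiv.ofInjective f hf).symm.toLinearMap ∘ₗ q.codRestrict _ hq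
  have hr : ∀ a, f (r a) + l (g a) = a := fun a => by simp [r, q]
  refine ⟨r, fun u => hf ?_, fun x => hf ?_, hr⟩
  · simpa [hfg.apply_apply_eq_zero] using hr (f u)
  · simpa [hl] using hr (l x)

end Splitting

section Decomposition

variable {k M P e e' : Type*} [CommRing k] [AddCommGroup M] [Module k M] [AddCommGroup P]
  [Module k P] [LieRing e] [LieAlgebra k e] [LieRing e'] [LieAlgebra k e']
  {i : M →ₗ[k] e} {s : P →ₗ[k] e}

theorem LinearMap.map_lie_iff_of_forall_add
    (hspan : ∀ a, ∃ u x, i u + s x = a) (γ : e →ₗ[k] e')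
    (hγi : ∀ u v, γ ⁅i u, i v⁆ = ⁅γ (i u), γ (i v)⁆) :
    (∀ a b, γ ⁅a, b⁆ = ⁅γ a, γ b⁆) ↔
      (∀ x u, γ ⁅s x, i u⁆ = ⁅γ (s x), γ (i u)⁆) ∧ ∀ x y, γ ⁅s x, s y⁆ = ⁅γ (s x), γ (s y)⁆ := by
  refine ⟨fun H => ⟨fun _ _ => H _ _, fun _ _ => H _ _⟩, fun ⟨hsi, hss⟩ a b => ?_⟩
  obtain ⟨u, x, rfl⟩ := hspan a
  obtain ⟨v, y, rfl⟩ := hspan b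
  have his : γ ⁅i u, s y⁆ = ⁅γ (i u), γ (s y)⁆ := by
    rw [← lie_skew, map_neg, hsi, lie_skew]
  simp only [add_lie, lie_add, map_add, hγi, his, hsi, hss]

theorem LinearMap.forall_apply_eq_iff_of_forall_add
    (hspan : ∀ a, ∃ u x, i u + s x = a) {γ γ' : e →ₗ[k] e'} (hi : ∀ u, γ (i u) = γ' (i u)) :
    (∀ a, γ a = γ' a) ↔ ∀ x, γ (s x) = γ' (s x) := by
  refine ⟨fun H _ => H _, fun H a => ?_⟩
  obtain ⟨u, x, rfl⟩ := hspan a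
  rw [map_add, map_add, hi, H]

end Decomposition

namespace NonabelianExtension

variable {k g h e : Type*} [CommRing k] [LieRing g] [LieAlgebra k g] [LieRing h] [LieAlgebra k h]
  [LieRing e] [LieAlgebra k e] {i : h →ₗ[k] e} {s : g →ₗ[k] e}
  {χ : g → g → h} {ψ : g → h → h}

theorem lie_incl_add_sec (hi : ∀ a b, i ⁅a, b⁆ = ⁅i a, i b⁆)
    (hχ : ∀ x y, i (χ x y) = ⁅s x, s y⁆ - s ⁅x, y⁆) (hψ : ∀ x a, i (ψ x a) = ⁅s x, i a⁆)
    (u v : h) (x y : g) :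
    ⁅i u + s x, i v + s y⁆ = i (⁅u, v⁆ + ψ x v - ψ y u + χ x y) + s ⁅x, y⁆ := by
  have hsi : ⁅i u, s y⁆ = -i (ψ y u) := by rw [hψ, ← lie_skew]
  simp only [add_lie, lie_add, map_add, map_sub, hi, hψ, hχ, hsi]
  abel

variable {γ : e →ₗ[k] e} {β : h → h} {α : g → g} {lam : g → h}

theorem map_lie_sec_incl_iff (hiInj : Function.Injective i) (hi : ∀ a b, i ⁅a, b⁆ = ⁅i a, i b⁆)
    (hψ : ∀ x a, i (ψ x a) = ⁅s x, i a⁆)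
    (hγi : ∀ a, γ (i a) = i (β a)) (hγs : ∀ x, γ (s x) = i (lam x) + s (α x)) (x : g) (a : h) :
    γ ⁅s x, i a⁆ = ⁅γ (s x), γ (i a)⁆ ↔ β (ψ x a) - ψ (α x) (β a) = ⁅lam x, β a⁆ := by
  rw [← hψ, hγi, hγs, hγi, add_lie, ← hi, ← hψ, ← map_add, hiInj.eq_iff, sub_eq_iff_eq_add]

theorem map_lie_sec_sec_iff (hiInj : Function.Injective i) (hi : ∀ a b, i ⁅a, b⁆ = ⁅i a, i b⁆)
    (hχ : ∀ x y, i (χ x y) = ⁅s x, s y⁆ - s ⁅x, y⁆) (hψ : ∀ x a, i (ψ x a) = ⁅s x, i a⁆)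
    (hα : ∀ x y, α ⁅x, y⁆ = ⁅α x, α y⁆)
    (hγi : ∀ a, γ (i a) = i (β a)) (hγs : ∀ x, γ (s x) = i (lam x) + s (α x)) (x y : g) :
    γ ⁅s x, s y⁆ = ⁅γ (s x), γ (s y)⁆ ↔ β (χ x y) - χ (α x) (α y)
      = ψ (α x) (lam y) - ψ (α y) (lam x) - lam ⁅x, y⁆ + ⁅lam x, lam y⁆ := by
  rw [← sub_add_cancel ⁅s x, s y⁆ (s ⁅x, y⁆), ← hχ, map_add, hγi, hγs, hγs, hγs,
    lie_incl_add_sec hi hχ hψ, hα, ← add_assoc, ← map_add, add_left_inj, hiInj.eq_iff]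
  constructor <;> intro H <;> linear_combination (norm := abel) H

theorem map_lie_iff (hspan : ∀ a, ∃ u x, i u + s x = a) (hiInj : Function.Injective i)
    (hi : ∀ a b, i ⁅a, b⁆ = ⁅i a, i b⁆)
    (hχ : ∀ x y, i (χ x y) = ⁅s x, s y⁆ - s ⁅x, y⁆) (hψ : ∀ x a, i (ψ x a) = ⁅s x, i a⁆)
    (hβ : ∀ a b, β ⁅a, b⁆ = ⁅β a, β b⁆) (hα : ∀ x y, α ⁅x, y⁆ = ⁅α x, α y⁆)
    (hγi : ∀ a, γ (i a) = i (β a)) (hγs : ∀ x, γ (s x) = i (lam x) + s (α x)) :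
    (∀ a b, γ ⁅a, b⁆ = ⁅γ a, γ b⁆) ↔
      (∀ x a, β (ψ x a) - ψ (α x) (β a) = ⁅lam x, β a⁆) ∧
      ∀ x y, β (χ x y) - χ (α x) (α y)
        = ψ (α x) (lam y) - ψ (α y) (lam x) - lam ⁅x, y⁆ + ⁅lam x, lam y⁆ := by
  rw [LinearMap.map_lie_iff_of_forall_add hspan γ fun u v => by rw [← hi, hγi, hγi, hγi, hβ, hi]]
  simp only [map_lie_sec_incl_iff hiInj hi hψ hγi hγs,
    map_lie_sec_sec_iff hiInj hi hχ hψ hα hγi hγs]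

variable {U : e →ₗ[k] e} {S : h →ₗ[k] h} {N : g →ₗ[k] g} {F : g → h}

theorem commute_sec_iff (hiInj : Function.Injective i) (hUi : ∀ a, U (i a) = i (S a))
    (hF : ∀ x, i (F x) = U (s x) - s (N x)) (hαN : ∀ x, α (N x) = N (α x))
    (hγi : ∀ a, γ (i a) = i (β a)) (hγs : ∀ x, γ (s x) = i (lam x) + s (α x)) (x : g) :
    γ (U (s x)) = U (γ (s x)) ↔ β (F x) - F (α x) = S (lam x) - lam (N x) := by
  have hUs : ∀ x, U (s x) = i (F x) + s (N x) := fun x => by rw [hF]; abel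
  rw [hUs, map_add, hγi, hγs, hγs, map_add, hUi, hUs, hαN, ← add_assoc, ← add_assoc,
    ← map_add, ← map_add, add_left_inj, hiInj.eq_iff, sub_eq_sub_iff_add_eq_add]

theorem commute_iff (hspan : ∀ a, ∃ u x, i u + s x = a) (hiInj : Function.Injective i)
    (hUi : ∀ a, U (i a) = i (S a)) (hF : ∀ x, i (F x) = U (s x) - s (N x))
    (hβS : ∀ a, β (S a) = S (β a)) (hαN : ∀ x, α (N x) = N (α x))
    (hγi : ∀ a, γ (i a) = i (β a)) (hγs : ∀ x, γ (s x) = i (lam x) + s (α x)) :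
    (∀ a, γ (U a) = U (γ a)) ↔ ∀ x, β (F x) - F (α x) = S (lam x) - lam (N x) :=
  (LinearMap.forall_apply_eq_iff_of_forall_add (γ := γ ∘ₗ U) (γ' := U ∘ₗ γ) hspan
    fun u => by simp only [LinearMap.comp_apply, hUi, hγi, hβS]).trans
    (forall_congr' (commute_sec_iff hiInj hUi hF hαN hγi hγs))

variable {p : e →ₗ[k] g}

theorem eq_of_incl_add_sec_eq (hiInj : Function.Injective i) (hpi : ∀ a, p (i a) = 0)
    (hs : ∀ x, p (s x) = x) {u v : h} {x y : g} (huv : i u + s x = i v + s y) :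
    u = v ∧ x = y := by
  have hxy : x = y := by simpa [hpi, hs] using congr_arg p huv
  subst hxy
  exact ⟨hiInj (add_right_cancel huv), rfl⟩

theorem apply_incl_add_sec (hγi : ∀ a, γ (i a) = i (β a))
    (hγs : ∀ x, γ (s x) = i (lam x) + s (α x)) (u : h) (x : g) :
    γ (i u + s x) = i (β u + lam x) + s (α x) := by
  rw [map_add, hγi, hγs, ← add_assoc, ← map_add]

theorem bijective_of_triangular (hiInj : Function.Injective i) (hpi : ∀ a, p (i a) = 0)
    (hs : ∀ x, p (s x) = x) (hspan : ∀ a, ∃ u x, i u + s x = a)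
    (hβ : Function.Bijective β) (hα : Function.Bijective α)
    (hγi : ∀ a, γ (i a) = i (β a)) (hγs : ∀ x, γ (s x) = i (lam x) + s (α x)) :
    Function.Bijective γ := by
  refine ⟨fun a b hab => ?_, fun b => ?_⟩
  · obtain ⟨u, x, rfl⟩ := hspan a
    obtain ⟨v, y, rfl⟩ := hspan b
    rw [apply_incl_add_sec hγi hγs, apply_incl_add_sec hγi hγs] at hab
    obtain ⟨huv, hxy⟩ := eq_of_incl_add_sec_eq hiInj hpi hs hab
    obtain rfl := hα.1 hxy
    rw [hβ.1 (add_right_cancel huv)]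
  · obtain ⟨v, y, rfl⟩ := hspan b
    obtain ⟨x, rfl⟩ := hα.2 y
    obtain ⟨u, hu⟩ := hβ.2 (v - lam x)
    exact ⟨i u + s x, by rw [apply_incl_add_sec hγi hγs, hu, sub_add_cancel]⟩

end NonabelianExtension

theorem stmt_8_general {k g h e : Type*} [Field k]
    [LieRing g] [LieAlgebra k g] [LieRing h] [LieAlgebra k h]
    [LieRing e] [LieAlgebra k e]
    (N : g →ₗ[k] g) (S : h →ₗ[k] h) (U : e →ₗ[k] e)
    (i : h →ₗ[k] e) (p : e →ₗ[k] g)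
    (hi : ∀ a b : h, i ⁅a, b⁆ = ⁅i a, i b⁆)
    (hiInj : Function.Injective i)
    (hexact : LinearMap.range i = LinearMap.ker p)
    (hUi : ∀ a : h, U (i a) = i (S a))
    -- a section of p and the associated non-abelian 2-cocycle
    (s : g →ₗ[k] e) (hs : ∀ x : g, p (s x) = x)
    (χ : g → g → h) (ψ : g → h → h) (F : g → h)
    (hχ : ∀ x y : g, i (χ x y) = ⁅s x, s y⁆ - s ⁅x, y⁆)
    (hψ : ∀ (x : g) (a : h), i (ψ x a) = ⁅s x, i a⁆)
    (hF : ∀ x : g, i (F x) = U (s x) - s (N x))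
    -- (β, α) ∈ Aut(h, S) × Aut(g, N)
    (β : h ≃ₗ[k] h) (α : g ≃ₗ[k] g)
    (hβLie : ∀ a b : h, β ⁅a, b⁆ = ⁅β a, β b⁆)
    (hβS : ∀ a : h, β (S a) = S (β a))
    (hαLie : ∀ x y : g, α ⁅x, y⁆ = ⁅α x, α y⁆)
    (hαN : ∀ x : g, α (N x) = N (α x)) :
    -- (β, α) is inducible
    (∃ γ : e →ₗ[k] e,
        (∀ a b : e, γ ⁅a, b⁆ = ⁅γ a, γ b⁆) ∧
        Function.Bijective γ ∧
        (∀ a : e, γ (U a) = U (γ a)) ∧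
        (∀ a : h, γ (i a) = i (β a)) ∧
        (∀ x : g, p (γ (s x)) = α x))
    ↔
    -- if and only if a linear map λ as in (1)-(3) exists
    (∃ lam : g →ₗ[k] h,
        (∀ (x : g) (a : h), β (ψ x a) - ψ (α x) (β a) = ⁅lam x, β a⁆) ∧
        (∀ x y : g, β (χ x y) - χ (α x) (α y)
            = ψ (α x) (lam y) - ψ (α y) (lam x) - lam ⁅x, y⁆ + ⁅lam x, lam y⁆) ∧
        (∀ x : g, β (F x) - F (α x) = S (lam x) - lam (N x))) := by
  have hip : Function.Exact i p := LinearMap.exact_iff.mpr hexact.symm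
  obtain ⟨r, hri, hrs, hdecomp⟩ := hip.exists_retraction_of_section hiInj hs
  have hspan : ∀ a, ∃ u x, i u + s x = a := fun a => ⟨r a, p a, hdecomp a⟩
  constructor
  · rintro ⟨γ, hγLie, -, hγU, hγi, hγs⟩
    have hγs' : ∀ x, γ (s x) = i (r (γ (s x))) + s (α x) := fun x => by
      rw [← hγs x, hdecomp]
    obtain ⟨h1, h2⟩ := (NonabelianExtension.map_lie_iff hspan hiInj hi hχ hψ hβLie hαLie
      hγi hγs').mp hγLie
    have h3 := (NonabelianExtension.commute_iff hspan hiInj hUi hF hβS hαN hγi hγs').mp hγU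
    exact ⟨r ∘ₗ γ ∘ₗ s, h1, h2, h3⟩
  · rintro ⟨lam, h1, h2, h3⟩
    let γ : e →ₗ[k] e := i ∘ₗ (β.toLinearMap ∘ₗ r + lam ∘ₗ p) + s ∘ₗ α.toLinearMap ∘ₗ p
    have hγi : ∀ a, γ (i a) = i (β a) := fun a => by simp [γ, hri, hip.apply_apply_eq_zero]
    have hγs : ∀ x, γ (s x) = i (lam x) + s (α x) := fun x => by simp [γ, hrs, hs]
    have hγLie := (NonabelianExtension.map_lie_iff hspan hiInj hi hχ hψ hβLie hαLie
      hγi hγs).mpr ⟨h1, h2⟩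
    have hγU := (NonabelianExtension.commute_iff hspan hiInj hUi hF hβS hαN hγi hγs).mpr h3
    have hγbij := NonabelianExtension.bijective_of_triangular hiInj hip.apply_apply_eq_zero hs
      hspan β.bijective α.bijective hγi hγs
    refine ⟨γ, hγLie, hγbij, hγU, hγi, fun x => ?_⟩
    rw [hγs, map_add, hip.apply_apply_eq_zero, hs, zero_add]

/-- Given a non-abelian extension of Nijenhuis Lie algebras, a section
`s` of `p` and the associated non-abelian 2-cocycle `(χ, ψ, F)` (given as lifts along
`i`), a pair `(β, α) ∈ Aut(h,S) × Aut(g,N)` is inducible if and only if there is a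
linear map `λ : g → h` satisfying identities (1)-(3). -/
theorem stmt_8 {k g h e : Type*} [Field k]
    [LieRing g] [LieAlgebra k g] [LieRing h] [LieAlgebra k h]
    [LieRing e] [LieAlgebra k e]
    (N : g →ₗ[k] g) (S : h →ₗ[k] h) (U : e →ₗ[k] e)
    (hN : ∀ x y : g, ⁅N x, N y⁆ = N (⁅N x, y⁆ + ⁅x, N y⁆ - N ⁅x, y⁆))
    (hS : ∀ a b : h, ⁅S a, S b⁆ = S (⁅S a, b⁆ + ⁅a, S b⁆ - S ⁅a, b⁆))
    (hU : ∀ a b : e, ⁅U a, U b⁆ = U (⁅U a, b⁆ + ⁅a, U b⁆ - U ⁅a, b⁆))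
    (i : h →ₗ[k] e) (p : e →ₗ[k] g)
    (hi : ∀ a b : h, i ⁅a, b⁆ = ⁅i a, i b⁆)
    (hp : ∀ a b : e, p ⁅a, b⁆ = ⁅p a, p b⁆)
    (hiInj : Function.Injective i) (hpSurj : Function.Surjective p)
    (hexact : LinearMap.range i = LinearMap.ker p)
    (hUi : ∀ a : h, U (i a) = i (S a))
    (hpU : ∀ a : e, p (U a) = N (p a))
    -- a section of p and the associated non-abelian 2-cocycle
    (s : g →ₗ[k] e) (hs : ∀ x : g, p (s x) = x)
    (χ : g → g → h) (ψ : g → h → h) (F : g → h)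
    (hχ : ∀ x y : g, i (χ x y) = ⁅s x, s y⁆ - s ⁅x, y⁆)
    (hψ : ∀ (x : g) (a : h), i (ψ x a) = ⁅s x, i a⁆)
    (hF : ∀ x : g, i (F x) = U (s x) - s (N x))
    -- (β, α) ∈ Aut(h, S) × Aut(g, N)
    (β : h ≃ₗ[k] h) (α : g ≃ₗ[k] g)
    (hβLie : ∀ a b : h, β ⁅a, b⁆ = ⁅β a, β b⁆)
    (hβS : ∀ a : h, β (S a) = S (β a))
    (hαLie : ∀ x y : g, α ⁅x, y⁆ = ⁅α x, α y⁆)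
    (hαN : ∀ x : g, α (N x) = N (α x)) :
    -- (β, α) is inducible
    (∃ γ : e →ₗ[k] e,
        (∀ a b : e, γ ⁅a, b⁆ = ⁅γ a, γ b⁆) ∧
        Function.Bijective γ ∧
        (∀ a : e, γ (U a) = U (γ a)) ∧
        (∀ a : h, γ (i a) = i (β a)) ∧
        (∀ x : g, p (γ (s x)) = α x))
    ↔
    -- if and only if a linear map λ as in (1)-(3) exists
    (∃ lam : g →ₗ[k] h,
        (∀ (x : g) (a : h), β (ψ x a) - ψ (α x) (β a) = ⁅lam x, β a⁆) ∧
        (∀ x y : g, β (χ x y) - χ (α x) (α y)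
            = ψ (α x) (lam y) - ψ (α y) (lam x) - lam ⁅x, y⁆ + ⁅lam x, lam y⁆) ∧
        (∀ x : g, β (F x) - F (α x) = S (lam x) - lam (N x))) :=
  stmt_8_general N S U i p hi hiInj hexact hUi s hs χ ψ F hχ hψ hF β α hβLie hβS hαLie hαN
end

section
/- Let (χ, ψ, F) be a non-abelian 2-cocycle of a Nijenhuis Lie algebra (g, [·,·]_g, N) with values in a Nijenhuis Lie algebra (h, [·,·]_h, S), and let (β, α) ∈ Aut(h, S) × Aut(g, N). Then the triple (χ_{(β,α)}, ψ_{(β,α)}, F_{(β,α)}) defined by χ_{(β,α)}(x,y) := β(χ(α⁻¹ x, α⁻¹ y)), (ψ_{(β,α)})_x h := β(ψ_{α⁻¹ x}(β⁻¹ h)), and F_{(β,α)}(x) := β(F(α⁻¹ x)) is also a non-abelian 2-cocycle of (g, N) with values in (h, S). -/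
namespace IsNijNonabelian2Cocycle

variable {k g g' h h' : Type*} [Field k]
  [LieRing g] [LieAlgebra k g] [LieRing g'] [LieAlgebra k g']
  [LieRing h] [LieAlgebra k h] [LieRing h'] [LieAlgebra k h']
  {N : g → g} {S : h → h} {χ : g → g → h} {ψ : g → h → h} {F : g → h}

theorem comp_lieHom (hc : IsNijNonabelian2Cocycle k N S χ ψ F)
    {N' : g' → g'} (φ : g' →ₗ⁅k⁆ g) (hφN : Function.Semiconj φ N' N) :
    IsNijNonabelian2Cocycle k N' S (fun x y => χ (φ x) (φ y)) (fun x => ψ (φ x))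
      (fun x => F (φ x)) := by
  obtain ⟨hχ₁, hχ₂, hψ₁, hψ₂, hF, hχ_self, hψ_der, hψ_curv, hχ_closed, hψ_N, hF_N⟩ := hc
  refine ⟨fun x => ((hχ₁ (φ x)).mk'.comp φ.toLinearMap).isLinear,
    fun y => ((hχ₂ (φ y)).mk'.comp φ.toLinearMap).isLinear, fun x => hψ₁ (φ x),
    fun a => ((hψ₂ a).mk'.comp φ.toLinearMap).isLinear, (hF.mk'.comp φ.toLinearMap).isLinear,
    fun x => hχ_self (φ x), fun x => hψ_der (φ x), fun x y a => ?_, fun x y z => ?_,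
    fun x a => ?_, fun x y => ?_⟩
  · simpa only [φ.map_lie] using hψ_curv (φ x) (φ y) a
  · simpa only [φ.map_lie] using hχ_closed (φ x) (φ y) (φ z)
  · simpa only [hφN.eq] using hψ_N (φ x) a
  · simpa only [hφN.eq, φ.map_lie, map_add, map_sub] using hF_N (φ x) (φ y)

theorem map_lieEquiv (hc : IsNijNonabelian2Cocycle k N S χ ψ F)
    {S' : h' → h'} (e : h ≃ₗ⁅k⁆ h') (heS : Function.Semiconj e S S') :
    IsNijNonabelian2Cocycle k N S' (fun x y => e (χ x y)) (fun x a => e (ψ x (e.symm a)))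
      (fun x => e (F x)) := by
  obtain ⟨hχ₁, hχ₂, hψ₁, hψ₂, hF, hχ_self, hψ_der, hψ_curv, hχ_closed, hψ_N, hF_N⟩ := hc
  have heS' : Function.Semiconj e.symm S' S :=
    heS.inverse_left e.symm_apply_apply e.apply_symm_apply
  refine ⟨fun x => (e.toLinearEquiv.toLinearMap.comp (hχ₁ x).mk').isLinear,
    fun y => (e.toLinearEquiv.toLinearMap.comp (hχ₂ y).mk').isLinear,
    fun x => ((e.toLinearEquiv.toLinearMap.comp (hψ₁ x).mk').comp
      e.symm.toLinearEquiv.toLinearMap).isLinear,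
    fun a => (e.toLinearEquiv.toLinearMap.comp (hψ₂ (e.symm a)).mk').isLinear,
    (e.toLinearEquiv.toLinearMap.comp hF.mk').isLinear,
    fun x => by simp only [hχ_self, map_zero], fun x a b => ?_, fun x y a => ?_,
    fun x y z => ?_, fun x a => ?_, fun x y => ?_⟩
  · simpa [e.map_lie, e.symm.map_lie] using congrArg e (hψ_der x (e.symm a) (e.symm b))
  · simpa [e.map_lie] using congrArg e (hψ_curv x y (e.symm a))
  · simpa using congrArg e (hχ_closed x y z)
  · simpa [e.map_lie, heS.eq, heS'.eq] using congrArg e (hψ_N x (e.symm a))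
  · simpa [e.map_lie, heS.eq, heS'.eq] using congrArg e (hF_N x y)

end IsNijNonabelian2Cocycle

theorem stmt_9_general {k g h : Type*} [Field k]
    [LieRing g] [LieAlgebra k g] [LieRing h] [LieAlgebra k h]
    (N : g →ₗ[k] g) (S : h →ₗ[k] h)
    (χ : g → g → h) (ψ : g → h → h) (F : g → h)
    (hc : IsNijNonabelian2Cocycle k (⇑N) (⇑S) χ ψ F)
    (β : h ≃ₗ[k] h) (α : g ≃ₗ[k] g)
    (hβLie : ∀ a b : h, β ⁅a, b⁆ = ⁅β a, β b⁆)
    (hβS : ∀ a : h, β (S a) = S (β a))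
    (hαLie : ∀ x y : g, α ⁅x, y⁆ = ⁅α x, α y⁆)
    (hαN : ∀ x : g, α (N x) = N (α x)) :
    IsNijNonabelian2Cocycle k (⇑N) (⇑S)
      (fun x y => β (χ (α.symm x) (α.symm y)))
      (fun x a => β (ψ (α.symm x) (β.symm a)))
      (fun x => β (F (α.symm x))) := by
  let αLie : g ≃ₗ⁅k⁆ g := { α with map_lie' := hαLie _ _ }
  let βLie : h ≃ₗ⁅k⁆ h := { β with map_lie' := hβLie _ _ }
  have hαN_symm : Function.Semiconj αLie.symm N N :=
    Function.Semiconj.inverse_left hαN α.symm_apply_apply α.apply_symm_apply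
  exact (hc.comp_lieHom αLie.symm.toLieHom hαN_symm).map_lieEquiv βLie hβS

/-- If `(χ, ψ, F)` is a non-abelian 2-cocycle of `(g, N)` with values in
`(h, S)` and `(β, α) ∈ Aut(h,S) × Aut(g,N)`, then the transformed triple
`(χ_{(β,α)}, ψ_{(β,α)}, F_{(β,α)})` with `χ_{(β,α)}(x,y) = β(χ(α⁻¹x, α⁻¹y))`,
`(ψ_{(β,α)})_x h = β(ψ_{α⁻¹x}(β⁻¹ h))`, `F_{(β,α)}(x) = β(F(α⁻¹ x))` is also a
non-abelian 2-cocycle. -/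
theorem stmt_9 {k g h : Type*} [Field k]
    [LieRing g] [LieAlgebra k g] [LieRing h] [LieAlgebra k h]
    (N : g →ₗ[k] g) (S : h →ₗ[k] h)
    (hN : ∀ x y : g, ⁅N x, N y⁆ = N (⁅N x, y⁆ + ⁅x, N y⁆ - N ⁅x, y⁆))
    (hS : ∀ a b : h, ⁅S a, S b⁆ = S (⁅S a, b⁆ + ⁅a, S b⁆ - S ⁅a, b⁆))
    (χ : g → g → h) (ψ : g → h → h) (F : g → h)
    (hc : IsNijNonabelian2Cocycle k (⇑N) (⇑S) χ ψ F)
    (β : h ≃ₗ[k] h) (α : g ≃ₗ[k] g)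
    (hβLie : ∀ a b : h, β ⁅a, b⁆ = ⁅β a, β b⁆)
    (hβS : ∀ a : h, β (S a) = S (β a))
    (hαLie : ∀ x y : g, α ⁅x, y⁆ = ⁅α x, α y⁆)
    (hαN : ∀ x : g, α (N x) = N (α x)) :
    IsNijNonabelian2Cocycle k (⇑N) (⇑S)
      (fun x y => β (χ (α.symm x) (α.symm y)))
      (fun x a => β (ψ (α.symm x) (β.symm a)))
      (fun x => β (F (α.symm x))) :=
  stmt_9_general N S χ ψ F hc β α hβLie hβS hαLie hαN
end

section
/- Let 0 → (h, [·,·]_h, S) →ⁱ (e, [·,·]_e, U) →ᵖ (g, [·,·]_g, N) → 0 be a non-abelian extension, let s and s̃ be two sections of p with associated non-abelian 2-cocycles (χ, ψ, F) and (χ̃, ψ̃, F̃), and let (β, α) ∈ Aut(h, S) × Aut(g, N). Set φ := s − s̃ (taking values in h). Then the non-abelian 2-cocycles (χ_{(β,α)}, ψ_{(β,α)}, F_{(β,α)}) and (χ̃_{(β,α)}, ψ̃_{(β,α)}, F̃_{(β,α)}) are equivalent via the map β ∘ φ ∘ α⁻¹ : g → h; consequently, the equivalence class of the difference (χ_{(β,α)},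 ψ_{(β,α)}, F_{(β,α)}) − (χ, ψ, F) does not depend on the choice of section. -/
/-!
Since `p (s x - s̃ x) = 0`, the difference of the two sections lifts to `φ : g → h`, and the
differences of the two cocycles are computed inside `e` by expanding brackets of
`s = s̃ + i ∘ φ`. Transport along `(β, α)` preserves equivalence because `β` and `α⁻¹` respect
the brackets and commute with `N` and `S`.
-/

lemma exists_lift_sub_of_sections {R g h e : Type*} [CommRing R] [AddCommGroup g] [Module R g]
    [AddCommGroup h] [Module R h] [AddCommGroup e] [Module R e]
    {i : h →ₗ[R] e} {p : e →ₗ[R] g} (hexact : LinearMap.range i = LinearMap.ker p)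
    {s st : g →ₗ[R] e} (hs : ∀ x : g, p (s x) = x) (hst : ∀ x : g, p (st x) = x) :
    ∃ φ : g → h, ∀ x : g, i (φ x) = s x - st x := by
  have hker (x : g) : s x - st x ∈ LinearMap.range i := by
    rw [hexact, LinearMap.mem_ker, map_sub, hs, hst, sub_self]
  exact ⟨fun x => (hker x).choose, fun x => (hker x).choose_spec⟩

section Cocycle

variable {R g h : Type*} [CommRing R] [LieRing g] [LieAlgebra R g] [LieRing h] [LieAlgebra R h]

structure CocycleEquivalent (N : g →ₗ[R] g) (S : h →ₗ[R] h)
    (χ : g → g → h) (ψ : g → h → h) (F : g → h)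
    (χ' : g → g → h) (ψ' : g → h → h) (F' : g → h) (φ : g → h) : Prop where
  sub_ψ : ∀ (x : g) (a : h), ψ x a - ψ' x a = ⁅φ x, a⁆
  sub_χ : ∀ x y : g, χ x y - χ' x y = ψ' x (φ y) - ψ' y (φ x) - φ ⁅x, y⁆ + ⁅φ x, φ y⁆
  sub_F : ∀ x : g, F x - F' x = S (φ x) - φ (N x)

lemma LinearEquiv.symm_map_lie (α : g ≃ₗ[R] g) (hα : ∀ x y : g, α ⁅x, y⁆ = ⁅α x, α y⁆)
    (x y : g) : α.symm ⁅x, y⁆ = ⁅α.symm x, α.symm y⁆ :=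
  α.injective (by simp only [hα, LinearEquiv.apply_symm_apply])

lemma LinearEquiv.symm_comm_of_comm {M : Type*} [AddCommGroup M] [Module R M]
    (α : M ≃ₗ[R] M) (N : M →ₗ[R] M) (hα : ∀ x : M, α (N x) = N (α x)) (x : M) :
    α.symm (N x) = N (α.symm x) :=
  α.injective (by simp only [hα, LinearEquiv.apply_symm_apply])

lemma CocycleEquivalent.transform {N : g →ₗ[R] g} {S : h →ₗ[R] h}
    {χ χ' : g → g → h} {ψ ψ' : g → h → h} {F F' : g → h} {φ : g → h}
    (hφ : CocycleEquivalent N S χ ψ F χ' ψ' F' φ) (β : h ≃ₗ[R] h) (α : g ≃ₗ[R] g)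
    (hβLie : ∀ a b : h, β ⁅a, b⁆ = ⁅β a, β b⁆) (hβS : ∀ a : h, β (S a) = S (β a))
    (hαLie : ∀ x y : g, α ⁅x, y⁆ = ⁅α x, α y⁆) (hαN : ∀ x : g, α (N x) = N (α x)) :
    CocycleEquivalent N S
      (fun x y => β (χ (α.symm x) (α.symm y))) (fun x a => β (ψ (α.symm x) (β.symm a)))
      (fun x => β (F (α.symm x)))
      (fun x y => β (χ' (α.symm x) (α.symm y))) (fun x a => β (ψ' (α.symm x) (β.symm a)))
      (fun x => β (F' (α.symm x)))
      (fun x => β (φ (α.symm x))) where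
  sub_ψ x a := by
    rw [← map_sub, hφ.sub_ψ, hβLie, β.apply_symm_apply]
  sub_χ x y := by
    simp only [β.symm_apply_apply]
    rw [← map_sub, hφ.sub_χ, α.symm_map_lie hαLie]
    simp only [map_add, map_sub, hβLie]
  sub_F x := by
    rw [← map_sub, hφ.sub_F, α.symm_comm_of_comm N hαN, map_sub, hβS]

end Cocycle

section Extension

variable {R g h e : Type*} [CommRing R] [LieRing g] [LieAlgebra R g] [LieRing h] [LieAlgebra R h]
  [LieRing e] [LieAlgebra R e]

lemma cocycleEquivalent_of_sections (N : g →ₗ[R] g) {S : h →ₗ[R] h} {U : e →ₗ[R] e}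
    {i : h →ₗ[R] e} (hi : ∀ a b : h, i ⁅a, b⁆ = ⁅i a, i b⁆) (hiInj : Function.Injective i)
    (hUi : ∀ a : h, U (i a) = i (S a)) {s st : g →ₗ[R] e}
    {χ : g → g → h} {ψ : g → h → h} {F : g → h}
    (hχ : ∀ x y : g, i (χ x y) = ⁅s x, s y⁆ - s ⁅x, y⁆)
    (hψ : ∀ (x : g) (a : h), i (ψ x a) = ⁅s x, i a⁆)
    (hF : ∀ x : g, i (F x) = U (s x) - s (N x))
    {χt : g → g → h} {ψt : g → h → h} {Ft : g → h}
    (hχt : ∀ x y : g, i (χt x y) = ⁅st x, st y⁆ - st ⁅x, y⁆)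
    (hψt : ∀ (x : g) (a : h), i (ψt x a) = ⁅st x, i a⁆)
    (hFt : ∀ x : g, i (Ft x) = U (st x) - st (N x))
    {φ : g → h} (hφ : ∀ x : g, i (φ x) = s x - st x) :
    CocycleEquivalent N S χ ψ F χt ψt Ft φ where
  sub_ψ x a := hiInj <| by
    rw [map_sub, hψ, hψt, hi, hφ, sub_lie]
  sub_χ x y := hiInj <| by
    simp only [map_sub, map_add, hχ, hχt, hψt, hi, hφ, ← lie_skew (st y), sub_lie, lie_sub]
    abel
  sub_F x := hiInj <| by
    rw [map_sub, hF, hFt, map_sub, ← hUi, hφ, hφ, map_sub]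
    abel

end Extension

theorem stmt_10_general {k g h e : Type*} [Field k]
    [LieRing g] [LieAlgebra k g] [LieRing h] [LieAlgebra k h]
    [LieRing e] [LieAlgebra k e]
    (N : g →ₗ[k] g) (S : h →ₗ[k] h) (U : e →ₗ[k] e)
    (i : h →ₗ[k] e) (p : e →ₗ[k] g)
    (hi : ∀ a b : h, i ⁅a, b⁆ = ⁅i a, i b⁆)
    (hiInj : Function.Injective i)
    (hexact : LinearMap.range i = LinearMap.ker p)
    (hUi : ∀ a : h, U (i a) = i (S a))
    -- two sections of p and their associated non-abelian 2-cocycles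
    (s st : g →ₗ[k] e) (hs : ∀ x : g, p (s x) = x) (hst : ∀ x : g, p (st x) = x)
    (χ : g → g → h) (ψ : g → h → h) (F : g → h)
    (hχ : ∀ x y : g, i (χ x y) = ⁅s x, s y⁆ - s ⁅x, y⁆)
    (hψ : ∀ (x : g) (a : h), i (ψ x a) = ⁅s x, i a⁆)
    (hF : ∀ x : g, i (F x) = U (s x) - s (N x))
    (χt : g → g → h) (ψt : g → h → h) (Ft : g → h)
    (hχt : ∀ x y : g, i (χt x y) = ⁅st x, st y⁆ - st ⁅x, y⁆)
    (hψt : ∀ (x : g) (a : h), i (ψt x a) = ⁅st x, i a⁆)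
    (hFt : ∀ x : g, i (Ft x) = U (st x) - st (N x))
    -- (β, α) ∈ Aut(h, S) × Aut(g, N)
    (β : h ≃ₗ[k] h) (α : g ≃ₗ[k] g)
    (hβLie : ∀ a b : h, β ⁅a, b⁆ = ⁅β a, β b⁆)
    (hβS : ∀ a : h, β (S a) = S (β a))
    (hαLie : ∀ x y : g, α ⁅x, y⁆ = ⁅α x, α y⁆)
    (hαN : ∀ x : g, α (N x) = N (α x)) :
    -- the transformed cocycles
    ∀ χB : g → g → h, χB = (fun x y => β (χ (α.symm x) (α.symm y))) →
    ∀ ψB : g → h → h, ψB = (fun x a => β (ψ (α.symm x) (β.symm a))) →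
    ∀ FB : g → h, FB = (fun x => β (F (α.symm x))) →
    ∀ χtB : g → g → h, χtB = (fun x y => β (χt (α.symm x) (α.symm y))) →
    ∀ ψtB : g → h → h, ψtB = (fun x a => β (ψt (α.symm x) (β.symm a))) →
    ∀ FtB : g → h, FtB = (fun x => β (Ft (α.symm x))) →
    ∃ φ : g → h,
      -- φ is the lift to h of s - s̃
      (∀ x : g, i (φ x) = s x - st x) ∧
      -- the transformed cocycles are equivalent via β ∘ φ ∘ α⁻¹
      (∀ (x : g) (a : h), ψB x a - ψtB x a = ⁅β (φ (α.symm x)), a⁆) ∧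
      (∀ x y : g, χB x y - χtB x y
          = ψtB x (β (φ (α.symm y))) - ψtB y (β (φ (α.symm x)))
            - β (φ (α.symm ⁅x, y⁆)) + ⁅β (φ (α.symm x)), β (φ (α.symm y))⁆) ∧
      (∀ x : g, FB x - FtB x = S (β (φ (α.symm x))) - β (φ (α.symm (N x)))) := by
  rintro _ rfl _ rfl _ rfl _ rfl _ rfl _ rfl
  obtain ⟨φ, hφ⟩ := exists_lift_sub_of_sections hexact hs hst
  have hequiv := (cocycleEquivalent_of_sections N hi hiInj hUi hχ hψ hF hχt hψt hFt hφ).transform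
    β α hβLie hβS hαLie hαN
  exact ⟨φ, hφ, hequiv.sub_ψ, hequiv.sub_χ, hequiv.sub_F⟩

/-- Let `s`, `s̃` be two sections of a non-abelian extension of
Nijenhuis Lie algebras, with associated non-abelian 2-cocycles `(χ, ψ, F)` and
`(χ̃, ψ̃, F̃)`, and let `(β, α) ∈ Aut(h,S) × Aut(g,N)`. Then `φ := s - s̃` takes values
in `h` and the transformed cocycles `(χ_{(β,α)}, ψ_{(β,α)}, F_{(β,α)})` and
`(χ̃_{(β,α)}, ψ̃_{(β,α)}, F̃_{(β,α)})` are equivalent via `β ∘ φ ∘ α⁻¹`; consequently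
the class of the difference with the untransformed cocycle is section-independent. -/
theorem stmt_10 {k g h e : Type*} [Field k]
    [LieRing g] [LieAlgebra k g] [LieRing h] [LieAlgebra k h]
    [LieRing e] [LieAlgebra k e]
    (N : g →ₗ[k] g) (S : h →ₗ[k] h) (U : e →ₗ[k] e)
    (hN : ∀ x y : g, ⁅N x, N y⁆ = N (⁅N x, y⁆ + ⁅x, N y⁆ - N ⁅x, y⁆))
    (hS : ∀ a b : h, ⁅S a, S b⁆ = S (⁅S a, b⁆ + ⁅a, S b⁆ - S ⁅a, b⁆))
    (hU : ∀ a b : e, ⁅U a, U b⁆ = U (⁅U a, b⁆ + ⁅a, U b⁆ - U ⁅a, b⁆))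
    (i : h →ₗ[k] e) (p : e →ₗ[k] g)
    (hi : ∀ a b : h, i ⁅a, b⁆ = ⁅i a, i b⁆)
    (hp : ∀ a b : e, p ⁅a, b⁆ = ⁅p a, p b⁆)
    (hiInj : Function.Injective i) (hpSurj : Function.Surjective p)
    (hexact : LinearMap.range i = LinearMap.ker p)
    (hUi : ∀ a : h, U (i a) = i (S a))
    (hpU : ∀ a : e, p (U a) = N (p a))
    -- two sections of p and their associated non-abelian 2-cocycles
    (s st : g →ₗ[k] e) (hs : ∀ x : g, p (s x) = x) (hst : ∀ x : g, p (st x) = x)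
    (χ : g → g → h) (ψ : g → h → h) (F : g → h)
    (hχ : ∀ x y : g, i (χ x y) = ⁅s x, s y⁆ - s ⁅x, y⁆)
    (hψ : ∀ (x : g) (a : h), i (ψ x a) = ⁅s x, i a⁆)
    (hF : ∀ x : g, i (F x) = U (s x) - s (N x))
    (χt : g → g → h) (ψt : g → h → h) (Ft : g → h)
    (hχt : ∀ x y : g, i (χt x y) = ⁅st x, st y⁆ - st ⁅x, y⁆)
    (hψt : ∀ (x : g) (a : h), i (ψt x a) = ⁅st x, i a⁆)
    (hFt : ∀ x : g, i (Ft x) = U (st x) - st (N x))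
    -- (β, α) ∈ Aut(h, S) × Aut(g, N)
    (β : h ≃ₗ[k] h) (α : g ≃ₗ[k] g)
    (hβLie : ∀ a b : h, β ⁅a, b⁆ = ⁅β a, β b⁆)
    (hβS : ∀ a : h, β (S a) = S (β a))
    (hαLie : ∀ x y : g, α ⁅x, y⁆ = ⁅α x, α y⁆)
    (hαN : ∀ x : g, α (N x) = N (α x)) :
    -- the transformed cocycles
    ∀ χB : g → g → h, χB = (fun x y => β (χ (α.symm x) (α.symm y))) →
    ∀ ψB : g → h → h, ψB = (fun x a => β (ψ (α.symm x) (β.symm a))) →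
    ∀ FB : g → h, FB = (fun x => β (F (α.symm x))) →
    ∀ χtB : g → g → h, χtB = (fun x y => β (χt (α.symm x) (α.symm y))) →
    ∀ ψtB : g → h → h, ψtB = (fun x a => β (ψt (α.symm x) (β.symm a))) →
    ∀ FtB : g → h, FtB = (fun x => β (Ft (α.symm x))) →
    ∃ φ : g → h,
      -- φ is the lift to h of s - s̃
      (∀ x : g, i (φ x) = s x - st x) ∧
      -- the transformed cocycles are equivalent via β ∘ φ ∘ α⁻¹
      (∀ (x : g) (a : h), ψB x a - ψtB x a = ⁅β (φ (α.symm x)), a⁆) ∧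
      (∀ x y : g, χB x y - χtB x y
          = ψtB x (β (φ (α.symm y))) - ψtB y (β (φ (α.symm x)))
            - β (φ (α.symm ⁅x, y⁆)) + ⁅β (φ (α.symm x)), β (φ (α.symm y))⁆) ∧
      (∀ x : g, FB x - FtB x = S (β (φ (α.symm x))) - β (φ (α.symm (N x)))) :=
  stmt_10_general N S U i p hi hiInj hexact hUi s st hs hst χ ψ F hχ hψ hF χt ψt Ft hχt hψt hFt β α
    hβLie hβS hαLie hαN
end

section
/- Let 0 → (h, [·,·]_h, S) →ⁱ (e, [·,·]_e, U) →ᵖ (g, [·,·]_g, N) → 0 be a non-abelian extension of Nijenhuis Lie algebras, s a section of p, and (χ, ψ, F) the associated non-abelian 2-cocycle. Then a pair (β, α) ∈ Aut(h, S) × Aut(g, N) is inducible if and only if the non-abelian 2-cocycles (χ_{(β,α)}, ψ_{(β,α)}, F_{(β,α)}) and (χ, ψ, F) are equivalent via some linear map φ : g → h (i.e. the Wells class W(β, α) vanishes). -/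
/-!
A section `s` identifies `e` with `g × h` through `(x, u) ↦ s x + i u`, and in these coordinates the
bracket and `U` of `e` are described by the cocycle of `s`. If `γ` induces `(β, α)`, then
`γ ∘ s ∘ α⁻¹` is another section whose cocycle is the transformed one; two sections differ by
`i ∘ φ`, and changing the section changes the cocycle by the coboundary of `φ`. Conversely, if the
transformed cocycle is equivalent to `(χ, ψ, F)` via `φ`, it is the cocycle of the section `s + i ∘ φ`,
and `s x + i u ↦ (s + i ∘ φ) (α x) + i (β u)` is an automorphism inducing `(β, α)`.
-/

open LinearMap

section Splitting

variable {k g h e : Type*} [Ring k] [AddCommGroup g] [AddCommGroup h] [AddCommGroup e]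
  [Module k g] [Module k h] [Module k e] {i : h →ₗ[k] e} {p : e →ₗ[k] g}

theorem LinearMap.exists_comp_eq_of_range_le {M : Type*} [AddCommGroup M] [Module k M]
    (hiInj : Function.Injective i) {f : M →ₗ[k] e} (hf : range f ≤ range i) :
    ∃ φ : M →ₗ[k] h, ∀ x, i (φ x) = f x :=
  ⟨(LinearEquiv.ofInjective i hiInj).symm.toLinearMap ∘ₗ f.codRestrict _ (fun x => hf ⟨x, rfl⟩),
    fun _ => congrArg Subtype.val ((LinearEquiv.ofInjective i hiInj).apply_symm_apply _)⟩

theorem LinearMap.coprod_bijective_of_section (hiInj : Function.Injective i)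
    (hexact : range i = ker p) (s : g →ₗ[k] e) (hs : ∀ x, p (s x) = x) :
    Function.Bijective (s.coprod i) := by
  have hpi : ∀ u, p (i u) = 0 := fun u => hexact.le ⟨u, rfl⟩
  refine ⟨(injective_iff_map_eq_zero _).2 fun ⟨x, u⟩ hxu => ?_, fun a => ?_⟩
  · have hx : x = 0 := by simpa [hs, hpi] using congrArg p hxu
    subst hx
    simpa using hiInj (by simpa using hxu)
  · obtain ⟨u, hu⟩ : a - s (p a) ∈ range i := hexact.ge (by simp [hs])
    exact ⟨(p a, u), by simp [hu]⟩

noncomputable def splitEquivOfSection (hiInj : Function.Injective i) (hexact : range i = ker p)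
    (s : g →ₗ[k] e) (hs : ∀ x, p (s x) = x) : (g × h) ≃ₗ[k] e :=
  LinearEquiv.ofBijective (s.coprod i) (coprod_bijective_of_section hiInj hexact s hs)

@[simp]
theorem splitEquivOfSection_apply (hiInj : Function.Injective i) (hexact : range i = ker p)
    (s : g →ₗ[k] e) (hs : ∀ x, p (s x) = x) (x : g) (u : h) :
    splitEquivOfSection hiInj hexact s hs (x, u) = s x + i u :=
  rfl

end Splitting

section Automorphisms

variable {k g : Type*} [CommRing k] [LieRing g] [LieAlgebra k g] {α : g ≃ₗ[k] g}

theorem LinearEquiv.symm_apply_lie (hα : ∀ x y : g, α ⁅x, y⁆ = ⁅α x, α y⁆) (x y : g) :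
    α.symm ⁅x, y⁆ = ⁅α.symm x, α.symm y⁆ :=
  α.symm_apply_eq.2 (by rw [hα, α.apply_symm_apply, α.apply_symm_apply])

theorem LinearEquiv.symm_apply_comm {N : g →ₗ[k] g} (hα : ∀ x, α (N x) = N (α x)) (x : g) :
    α.symm (N x) = N (α.symm x) :=
  α.symm_apply_eq.2 (by rw [hα, α.apply_symm_apply])

end Automorphisms

structure NonabelianCocycle (g h : Type*) where
  χ : g → g → h
  ψ : g → h → h
  F : g → h

namespace NonabelianCocycle

variable {k g h e : Type*} [CommRing k] [LieRing g] [LieAlgebra k g] [LieRing h] [LieAlgebra k h]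
  [LieRing e] [LieAlgebra k e] {N : g →ₗ[k] g} {S : h →ₗ[k] h} {U : e →ₗ[k] e} {i : h →ₗ[k] e}
  {s s' : g →ₗ[k] e} {c c' : NonabelianCocycle g h}

/-- The cocycle `(χ_{(β,α)}, ψ_{(β,α)}, F_{(β,α)})`. -/
@[simps]
def transform (c : NonabelianCocycle g h) (β : h ≃ₗ[k] h) (α : g ≃ₗ[k] g) :
    NonabelianCocycle g h where
  χ x y := β (c.χ (α.symm x) (α.symm y))
  ψ x a := β (c.ψ (α.symm x) (β.symm a))
  F x := β (c.F (α.symm x))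

def IsOfSection (i : h →ₗ[k] e) (U : e →ₗ[k] e) (N : g →ₗ[k] g) (s : g →ₗ[k] e)
    (c : NonabelianCocycle g h) : Prop :=
  (∀ x y, i (c.χ x y) = ⁅s x, s y⁆ - s ⁅x, y⁆) ∧ (∀ x a, i (c.ψ x a) = ⁅s x, i a⁆) ∧
    ∀ x, i (c.F x) = U (s x) - s (N x)

def EquivVia (S : h →ₗ[k] h) (N : g →ₗ[k] g) (φ : g →ₗ[k] h) (c c' : NonabelianCocycle g h) :
    Prop :=
  (∀ x a, c.ψ x a - c'.ψ x a = ⁅φ x, a⁆) ∧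
    (∀ x y, c.χ x y - c'.χ x y = c'.ψ x (φ y) - c'.ψ y (φ x) - φ ⁅x, y⁆ + ⁅φ x, φ y⁆) ∧
    ∀ x, c.F x - c'.F x = S (φ x) - φ (N x)

theorem IsOfSection.lie_section_add (hc : c.IsOfSection i U N s)
    (hi : ∀ a b, i ⁅a, b⁆ = ⁅i a, i b⁆) (x y : g) (u v : h) :
    ⁅s x + i u, s y + i v⁆ = s ⁅x, y⁆ + i (c.χ x y + c.ψ x v - c.ψ y u + ⁅u, v⁆) := by
  have hvs : ⁅i u, s y⁆ = -i (c.ψ y u) := by rw [← lie_skew, hc.2.1]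
  simp only [add_lie, lie_add, map_add, map_sub, hc.1, hc.2.1, hvs, hi]
  abel

theorem IsOfSection.map_section_add (hc : c.IsOfSection i U N s) (hUi : ∀ a, U (i a) = i (S a))
    (x : g) (u : h) : U (s x + i u) = s (N x) + i (c.F x + S u) := by
  rw [map_add, map_add, hUi, hc.2.2]
  abel

theorem IsOfSection.isOfSection_iff_equivVia (hc : c.IsOfSection i U N s)
    (hiInj : Function.Injective i) (hi : ∀ a b, i ⁅a, b⁆ = ⁅i a, i b⁆)
    (hUi : ∀ a, U (i a) = i (S a)) {φ : g →ₗ[k] h} (hφ : ∀ x, i (φ x) = s' x - s x) :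
    c'.IsOfSection i U N s' ↔ c'.EquivVia S N φ c := by
  have hs' : ∀ x, s' x = s x + i (φ x) := fun x => by rw [hφ]; abel
  have hχ : ∀ x y, ⁅s' x, s' y⁆ - s' ⁅x, y⁆
      = i (c.χ x y + (c.ψ x (φ y) - c.ψ y (φ x) - φ ⁅x, y⁆ + ⁅φ x, φ y⁆)) := fun x y => by
    rw [hs', hs', hs', hc.lie_section_add hi]
    simp only [map_add, map_sub]
    abel
  have hψ : ∀ x a, ⁅s' x, i a⁆ = i (c.ψ x a + ⁅φ x, a⁆) := fun x a => by
    rw [hs', add_lie, ← hi, map_add, hc.2.1]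
  have hF : ∀ x, U (s' x) - s' (N x) = i (c.F x + (S (φ x) - φ (N x))) := fun x => by
    rw [hs', hs', hc.map_section_add hUi]
    simp only [map_add, map_sub]
    abel
  simp only [IsOfSection, EquivVia, hχ, hψ, hF, hiInj.eq_iff, sub_eq_iff_eq_add']
  exact and_left_comm

theorem IsOfSection.transform (hc : c.IsOfSection i U N s) {β : h ≃ₗ[k] h} {α : g ≃ₗ[k] g}
    (hαLie : ∀ x y, α ⁅x, y⁆ = ⁅α x, α y⁆) (hαN : ∀ x, α (N x) = N (α x)) {γ : e →ₗ[k] e}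
    (hγLie : ∀ a b, γ ⁅a, b⁆ = ⁅γ a, γ b⁆) (hγU : ∀ a, γ (U a) = U (γ a))
    (hγi : ∀ a, γ (i a) = i (β a)) :
    (c.transform β α).IsOfSection i U N (γ ∘ₗ s ∘ₗ α.symm.toLinearMap) := by
  refine ⟨fun x y => ?_, fun x a => ?_, fun x => ?_⟩
  · simp [← hγi, hc.1, hγLie, α.symm_apply_lie hαLie]
  · rw [transform_ψ, ← hγi, hc.2.1, hγLie, hγi, β.apply_symm_apply]
    rfl
  · simp [← hγi, hc.2.2, hγU, α.symm_apply_comm hαN]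

theorem IsOfSection.exists_linearEquiv_of_transform (hc : c.IsOfSection i U N s) {p : e →ₗ[k] g}
    (hiInj : Function.Injective i) (hexact : range i = ker p) (hi : ∀ a b, i ⁅a, b⁆ = ⁅i a, i b⁆)
    (hUi : ∀ a, U (i a) = i (S a)) (hs : ∀ x, p (s x) = x) (hs' : ∀ x, p (s' x) = x)
    {β : h ≃ₗ[k] h} {α : g ≃ₗ[k] g} (hβLie : ∀ a b, β ⁅a, b⁆ = ⁅β a, β b⁆)
    (hβS : ∀ a, β (S a) = S (β a)) (hαLie : ∀ x y, α ⁅x, y⁆ = ⁅α x, α y⁆)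
    (hαN : ∀ x, α (N x) = N (α x)) (hc' : (c.transform β α).IsOfSection i U N s') :
    ∃ γ : e ≃ₗ[k] e, (∀ a b, γ ⁅a, b⁆ = ⁅γ a, γ b⁆) ∧ (∀ a, γ (U a) = U (γ a)) ∧
      (∀ a, γ (i a) = i (β a)) ∧ ∀ x, γ (s x) = s' (α x) := by
  set E := splitEquivOfSection hiInj hexact s hs
  set γ := E.symm ≪≫ₗ α.prodCongr β ≪≫ₗ splitEquivOfSection hiInj hexact s' hs'
  have hγ : ∀ x u, γ (s x + i u) = s' (α x) + i (β u) := fun x u => by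
    change γ (E (x, u)) = _
    simp only [γ, LinearEquiv.trans_apply, LinearEquiv.symm_apply_apply]
    rfl
  refine ⟨γ, fun a b => ?_, fun a => ?_, fun u => by simpa using hγ 0 u,
    fun x => by simpa using hγ x 0⟩
  · obtain ⟨⟨x, u⟩, rfl⟩ := E.surjective a
    obtain ⟨⟨y, v⟩, rfl⟩ := E.surjective b
    simp only [E, splitEquivOfSection_apply, hc.lie_section_add hi, hc'.lie_section_add hi, hγ]
    simp [hαLie, hβLie]
  · obtain ⟨⟨x, u⟩, rfl⟩ := E.surjective a
    simp only [E, splitEquivOfSection_apply, hc.map_section_add hUi, hc'.map_section_add hUi, hγ]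
    simp [hαN, hβS]

end NonabelianCocycle

open NonabelianCocycle

theorem stmt_11_general {k g h e : Type*} [Field k]
    [LieRing g] [LieAlgebra k g] [LieRing h] [LieAlgebra k h]
    [LieRing e] [LieAlgebra k e]
    (N : g →ₗ[k] g) (S : h →ₗ[k] h) (U : e →ₗ[k] e)
    (i : h →ₗ[k] e) (p : e →ₗ[k] g)
    (hi : ∀ a b : h, i ⁅a, b⁆ = ⁅i a, i b⁆)
    (hiInj : Function.Injective i)
    (hexact : LinearMap.range i = LinearMap.ker p)
    (hUi : ∀ a : h, U (i a) = i (S a))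
    -- a section of p and the associated non-abelian 2-cocycle
    (s : g →ₗ[k] e) (hs : ∀ x : g, p (s x) = x)
    (χ : g → g → h) (ψ : g → h → h) (F : g → h)
    (hχ : ∀ x y : g, i (χ x y) = ⁅s x, s y⁆ - s ⁅x, y⁆)
    (hψ : ∀ (x : g) (a : h), i (ψ x a) = ⁅s x, i a⁆)
    (hF : ∀ x : g, i (F x) = U (s x) - s (N x))
    -- (β, α) ∈ Aut(h, S) × Aut(g, N)
    (β : h ≃ₗ[k] h) (α : g ≃ₗ[k] g)
    (hβLie : ∀ a b : h, β ⁅a, b⁆ = ⁅β a, β b⁆)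
    (hβS : ∀ a : h, β (S a) = S (β a))
    (hαLie : ∀ x y : g, α ⁅x, y⁆ = ⁅α x, α y⁆)
    (hαN : ∀ x : g, α (N x) = N (α x)) :
    -- (β, α) is inducible
    (∃ γ : e →ₗ[k] e,
        (∀ a b : e, γ ⁅a, b⁆ = ⁅γ a, γ b⁆) ∧
        Function.Bijective γ ∧
        (∀ a : e, γ (U a) = U (γ a)) ∧
        (∀ a : h, γ (i a) = i (β a)) ∧
        (∀ x : g, p (γ (s x)) = α x))
    ↔
    -- iff the transformed cocycle is equivalent to (χ, ψ, F) via some φ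
    (∃ φ : g →ₗ[k] h,
        (∀ (x : g) (a : h),
          β (ψ (α.symm x) (β.symm a)) - ψ x a = ⁅φ x, a⁆) ∧
        (∀ x y : g,
          β (χ (α.symm x) (α.symm y)) - χ x y
            = ψ x (φ y) - ψ y (φ x) - φ ⁅x, y⁆ + ⁅φ x, φ y⁆) ∧
        (∀ x : g, β (F (α.symm x)) - F x = S (φ x) - φ (N x))) := by
  have hc : IsOfSection i U N s ⟨χ, ψ, F⟩ := ⟨hχ, hψ, hF⟩
  have hpi : ∀ u, p (i u) = 0 := fun u => hexact.le ⟨u, rfl⟩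
  constructor
  · rintro ⟨γ, hγLie, -, hγU, hγi, hγs⟩
    obtain ⟨φ, hφ⟩ := exists_comp_eq_of_range_le hiInj (f := γ ∘ₗ s ∘ₗ α.symm.toLinearMap - s)
      (fun _ ⟨x, hx⟩ => hexact.ge (by simp [← hx, hγs, hs]))
    exact ⟨φ, (hc.isOfSection_iff_equivVia hiInj hi hUi hφ).1
      (hc.transform hαLie hαN hγLie hγU hγi)⟩
  · rintro ⟨φ, hφ⟩
    have hsφ : IsOfSection i U N (s + i ∘ₗ φ) (transform ⟨χ, ψ, F⟩ β α) :=
      (hc.isOfSection_iff_equivVia hiInj hi hUi (by simp)).2 hφ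
    obtain ⟨γ, hγLie, hγU, hγi, hγs⟩ := hc.exists_linearEquiv_of_transform hiInj hexact hi hUi hs
      (by simp [hs, hpi]) hβLie hβS hαLie hαN hsφ
    exact ⟨γ, hγLie, γ.bijective, hγU, hγi, fun x => by simp [hγs, hs, hpi]⟩

/-- Given a non-abelian extension of Nijenhuis Lie algebras, a section
`s` and the associated non-abelian 2-cocycle `(χ, ψ, F)`, a pair
`(β, α) ∈ Aut(h,S) × Aut(g,N)` is inducible if and only if the transformed cocycle
`(χ_{(β,α)}, ψ_{(β,α)}, F_{(β,α)})` is equivalent to `(χ, ψ, F)` via some linear map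
`φ : g → h` (i.e. the Wells class `W(β, α)` vanishes). -/
theorem stmt_11 {k g h e : Type*} [Field k]
    [LieRing g] [LieAlgebra k g] [LieRing h] [LieAlgebra k h]
    [LieRing e] [LieAlgebra k e]
    (N : g →ₗ[k] g) (S : h →ₗ[k] h) (U : e →ₗ[k] e)
    (hN : ∀ x y : g, ⁅N x, N y⁆ = N (⁅N x, y⁆ + ⁅x, N y⁆ - N ⁅x, y⁆))
    (hS : ∀ a b : h, ⁅S a, S b⁆ = S (⁅S a, b⁆ + ⁅a, S b⁆ - S ⁅a, b⁆))
    (hU : ∀ a b : e, ⁅U a, U b⁆ = U (⁅U a, b⁆ + ⁅a, U b⁆ - U ⁅a, b⁆))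
    (i : h →ₗ[k] e) (p : e →ₗ[k] g)
    (hi : ∀ a b : h, i ⁅a, b⁆ = ⁅i a, i b⁆)
    (hp : ∀ a b : e, p ⁅a, b⁆ = ⁅p a, p b⁆)
    (hiInj : Function.Injective i) (hpSurj : Function.Surjective p)
    (hexact : LinearMap.range i = LinearMap.ker p)
    (hUi : ∀ a : h, U (i a) = i (S a))
    (hpU : ∀ a : e, p (U a) = N (p a))
    -- a section of p and the associated non-abelian 2-cocycle
    (s : g →ₗ[k] e) (hs : ∀ x : g, p (s x) = x)
    (χ : g → g → h) (ψ : g → h → h) (F : g → h)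
    (hχ : ∀ x y : g, i (χ x y) = ⁅s x, s y⁆ - s ⁅x, y⁆)
    (hψ : ∀ (x : g) (a : h), i (ψ x a) = ⁅s x, i a⁆)
    (hF : ∀ x : g, i (F x) = U (s x) - s (N x))
    -- (β, α) ∈ Aut(h, S) × Aut(g, N)
    (β : h ≃ₗ[k] h) (α : g ≃ₗ[k] g)
    (hβLie : ∀ a b : h, β ⁅a, b⁆ = ⁅β a, β b⁆)
    (hβS : ∀ a : h, β (S a) = S (β a))
    (hαLie : ∀ x y : g, α ⁅x, y⁆ = ⁅α x, α y⁆)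
    (hαN : ∀ x : g, α (N x) = N (α x)) :
    -- (β, α) is inducible
    (∃ γ : e →ₗ[k] e,
        (∀ a b : e, γ ⁅a, b⁆ = ⁅γ a, γ b⁆) ∧
        Function.Bijective γ ∧
        (∀ a : e, γ (U a) = U (γ a)) ∧
        (∀ a : h, γ (i a) = i (β a)) ∧
        (∀ x : g, p (γ (s x)) = α x))
    ↔
    -- iff the transformed cocycle is equivalent to (χ, ψ, F) via some φ
    (∃ φ : g →ₗ[k] h,
        (∀ (x : g) (a : h),
          β (ψ (α.symm x) (β.symm a)) - ψ x a = ⁅φ x, a⁆) ∧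
        (∀ x y : g,
          β (χ (α.symm x) (α.symm y)) - χ x y
            = ψ x (φ y) - ψ y (φ x) - φ ⁅x, y⁆ + ⁅φ x, φ y⁆) ∧
        (∀ x : g, β (F (α.symm x)) - F x = S (φ x) - φ (N x))) :=
  stmt_11_general N S U i p hi hiInj hexact hUi s hs χ ψ F hχ hψ hF β α hβLie hβS hαLie hαN
end

section
/- Let 0 → (V, S) →ⁱ (e, [·,·]_e, U) →ᵖ (g, [·,·]_g, N) → 0 be an abelian extension of the Nijenhuis Lie algebra (g, N) with induced Nijenhuis representation (V, ρ, S), let s be a section of p and (χ, F) the associated 2-cocycle. Then a pair (β, α) ∈ Aut(V, S) × Aut(g, N) is inducible if and only if both: (1) β(ρ_x v) = ρ_{α x}(β v) for all x ∈ g, v ∈ V (i.e. (β, α) is a compatible pair), and (2) there exists a linear map φ : g → V with β(χ(α⁻¹ x, α⁻¹ y)) − χ(x,y) = ρ_x(φ y) − ρ_y(φ x) − φ([x,y]_g) and β(F(α⁻¹ x)) − F(x) = S(φ x) − φ(N x) for all x, y ∈ g. -/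
/-!
A section `s` and the retraction `r` it determines identify `e` with `g ⊕ V`; in these
coordinates `⁅s x + i u, s y + i v⁆ = s ⁅x, y⁆ + i (χ x y + ρ x v - ρ y u)` and
`U (s x + i u) = s (N x) + i (F x + S u)`.
A linear map `γ` with `γ ∘ i = i ∘ β` and `p ∘ γ ∘ s = α` is forced to be
`s x + i u ↦ s (α x) + i (β u + φ (α x))` with `φ = r ∘ γ ∘ s ∘ α⁻¹`, and every such map is
bijective.
Comparing the two coordinates of `γ ⁅a, b⁆ = ⁅γ a, γ b⁆` and of `γ (U a) = U (γ a)` gives exactly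
the compatibility of `(β, α)` and the two coboundary equations for `φ`.
-/

namespace AbelianExtension

section Splitting

variable {k g V e : Type*} [Ring k] [AddCommGroup g] [Module k g] [AddCommGroup V] [Module k V]
  [AddCommGroup e] [Module k e]

structure IsSplitting (i : V →ₗ[k] e) (p : e →ₗ[k] g) (s : g →ₗ[k] e) (r : e →ₗ[k] V) :
    Prop where
  proj_section : ∀ x, p (s x) = x
  proj_incl : ∀ v, p (i v) = 0
  retraction_section : ∀ x, r (s x) = 0
  retraction_incl : ∀ v, r (i v) = v
  section_add_incl : ∀ a, s (p a) + i (r a) = a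

def liftOfPair (i : V →ₗ[k] e) (p : e →ₗ[k] g) (s : g →ₗ[k] e) (r : e →ₗ[k] V)
    (β : V ≃ₗ[k] V) (α : g ≃ₗ[k] g) (φ : g →ₗ[k] V) : e →ₗ[k] e :=
  s ∘ₗ α.toLinearMap ∘ₗ p + i ∘ₗ (β.toLinearMap ∘ₗ r + φ ∘ₗ α.toLinearMap ∘ₗ p)

variable {i : V →ₗ[k] e} {p : e →ₗ[k] g} {s : g →ₗ[k] e} {r : e →ₗ[k] V}

theorem exists_isSplitting (hi : Function.Injective i)
    (hexact : LinearMap.range i = LinearMap.ker p) (hs : ∀ x, p (s x) = x) :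
    ∃ r, IsSplitting i p s r := by
  have hpi : ∀ v, p (i v) = 0 := fun v => by
    simp [← LinearMap.mem_ker, ← hexact]
  set q : e →ₗ[k] e := LinearMap.id - s ∘ₗ p
  have hmem : ∀ a, q a ∈ LinearMap.range i := fun a => by
    simp [q, hexact, hs]
  set r := (LinearEquiv.ofInjective i hi).symm.toLinearMap ∘ₗ q.codRestrict _ hmem
  have hr : ∀ a, i (r a) = a - s (p a) := fun a => by
    simp [r, q]
  refine ⟨r, hs, hpi, fun x => hi ?_, fun v => hi ?_, fun a => ?_⟩
  · simp [hr, hs]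
  · simp [hr, hpi]
  · simp [hr]

namespace IsSplitting

theorem incl_injective (h : IsSplitting i p s r) : Function.Injective i :=
  Function.LeftInverse.injective h.retraction_incl

theorem proj_section_add_incl (h : IsSplitting i p s r) (x : g) (u : V) :
    p (s x + i u) = x := by
  simp [h.proj_section, h.proj_incl]

theorem retraction_section_add_incl (h : IsSplitting i p s r) (x : g) (u : V) :
    r (s x + i u) = u := by
  simp [h.retraction_section, h.retraction_incl]

theorem section_add_incl_inj (h : IsSplitting i p s r) {x y : g} {u v : V} :
    s x + i u = s y + i v ↔ x = y ∧ u = v := by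
  refine ⟨fun hxy => ⟨?_, ?_⟩, fun ⟨hx, hu⟩ => hx ▸ hu ▸ rfl⟩
  · simpa only [h.proj_section_add_incl] using congrArg p hxy
  · simpa only [h.retraction_section_add_incl] using congrArg r hxy

theorem forall_iff_forall_section_add_incl (h : IsSplitting i p s r) {P : e → Prop} :
    (∀ a, P a) ↔ ∀ x u, P (s x + i u) :=
  ⟨fun hP _ _ => hP _, fun hP a => h.section_add_incl a ▸ hP _ _⟩

variable (β : V ≃ₗ[k] V) (α : g ≃ₗ[k] g) (φ : g →ₗ[k] V)

theorem liftOfPair_section_add_incl (h : IsSplitting i p s r) (x : g) (u : V) :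
    liftOfPair i p s r β α φ (s x + i u) = s (α x) + i (β u + φ (α x)) := by
  simp [liftOfPair, h.proj_section_add_incl, h.retraction_section_add_incl]

theorem liftOfPair_incl (h : IsSplitting i p s r) (v : V) :
    liftOfPair i p s r β α φ (i v) = i (β v) := by
  simpa using h.liftOfPair_section_add_incl β α φ 0 v

theorem proj_liftOfPair (h : IsSplitting i p s r) (a : e) :
    p (liftOfPair i p s r β α φ a) = α (p a) := by
  simp [liftOfPair, h.proj_section, h.proj_incl]

theorem liftOfPair_bijective (h : IsSplitting i p s r) :
    Function.Bijective (liftOfPair i p s r β α φ) := by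
  set ψ : g →ₗ[k] V := -(β.symm.toLinearMap ∘ₗ φ ∘ₗ α.toLinearMap)
  refine Function.bijective_iff_has_inverse.mpr ⟨liftOfPair i p s r β.symm α.symm ψ, ?_, ?_⟩ <;>
    intro a <;>
    rw [← h.section_add_incl a, h.liftOfPair_section_add_incl, h.liftOfPair_section_add_incl] <;>
    simp [ψ]

theorem eq_liftOfPair (h : IsSplitting i p s r) {γ : e →ₗ[k] e}
    (hγi : ∀ v, γ (i v) = i (β v)) (hγs : ∀ x, p (γ (s x)) = α x) :
    γ = liftOfPair i p s r β α (r ∘ₗ γ ∘ₗ s ∘ₗ α.symm.toLinearMap) := by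
  ext a
  rw [← h.section_add_incl a, h.liftOfPair_section_add_incl, map_add, hγi,
    ← h.section_add_incl (γ (s (p a))), hγs]
  simp only [LinearMap.comp_apply, LinearEquiv.coe_coe, LinearEquiv.symm_apply_apply, map_add]
  abel

end IsSplitting

end Splitting

section Extension

variable {k g V e : Type*} [CommRing k] [LieRing g] [LieAlgebra k g] [AddCommGroup V]
  [Module k V] [LieRing e] [LieAlgebra k e]
  {i : V →ₗ[k] e} {p : e →ₗ[k] g} {s : g →ₗ[k] e} {r : e →ₗ[k] V}
  {ρ : g → V → V} {χ : g → g → V} {β : V ≃ₗ[k] V} {α : g ≃ₗ[k] g}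

theorem lie_section_add_incl (hab : ∀ u v : V, ⁅i u, i v⁆ = 0)
    (hρ : ∀ x v, i (ρ x v) = ⁅s x, i v⁆) (hχ : ∀ x y, i (χ x y) = ⁅s x, s y⁆ - s ⁅x, y⁆)
    (x y : g) (u v : V) :
    ⁅s x + i u, s y + i v⁆ = s ⁅x, y⁆ + i (χ x y + ρ x v - ρ y u) := by
  simp only [add_lie, lie_add, hab, map_add, map_sub, hρ, hχ, ← lie_skew (i u)]
  abel

theorem map_section_add_incl {U : e →ₗ[k] e} {S : V →ₗ[k] V} {N : g →ₗ[k] g} {F : g → V}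
    (hUi : ∀ v, U (i v) = i (S v)) (hF : ∀ x, i (F x) = U (s x) - s (N x)) (x : g) (u : V) :
    U (s x + i u) = s (N x) + i (F x + S u) := by
  rw [map_add, hUi, map_add, hF]
  abel

theorem rep_add (hi : Function.Injective i) (hρ : ∀ x v, i (ρ x v) = ⁅s x, i v⁆) (x : g)
    (u v : V) : ρ x (u + v) = ρ x u + ρ x v :=
  hi (by simp only [map_add, hρ, lie_add])

variable (φ : g →ₗ[k] V)

theorem IsSplitting.liftOfPair_lie_iff (h : IsSplitting i p s r)
    (hab : ∀ u v : V, ⁅i u, i v⁆ = 0) (hρ : ∀ x v, i (ρ x v) = ⁅s x, i v⁆)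
    (hχ : ∀ x y, i (χ x y) = ⁅s x, s y⁆ - s ⁅x, y⁆) (hαLie : ∀ x y, α ⁅x, y⁆ = ⁅α x, α y⁆) :
    (∀ a b, liftOfPair i p s r β α φ ⁅a, b⁆ =
        ⁅liftOfPair i p s r β α φ a, liftOfPair i p s r β α φ b⁆) ↔
      (∀ x v, β (ρ x v) = ρ (α x) (β v)) ∧
      ∀ x y, β (χ (α.symm x) (α.symm y)) - χ x y = ρ x (φ y) - ρ y (φ x) - φ ⁅x, y⁆ := by
  have hρadd := rep_add h.incl_injective hρ
  have hρ0 : ∀ x, ρ x 0 = 0 := fun x => h.incl_injective (by simp [hρ])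
  have hcoord : ∀ x y u v, liftOfPair i p s r β α φ ⁅s x + i u, s y + i v⁆ =
        ⁅liftOfPair i p s r β α φ (s x + i u), liftOfPair i p s r β α φ (s y + i v)⁆ ↔
      β (χ x y + ρ x v - ρ y u) + φ ⁅α x, α y⁆ =
        χ (α x) (α y) + ρ (α x) (β v + φ (α y)) - ρ (α y) (β u + φ (α x)) := fun x y u v => by
    simp only [lie_section_add_incl hab hρ hχ, h.liftOfPair_section_add_incl,
      h.section_add_incl_inj, hαLie, true_and]
  constructor
  · intro H
    have hV : ∀ x y u v, _ := fun x y u v => (hcoord x y u v).1 (H _ _)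
    refine ⟨fun x v => ?_, fun x y => ?_⟩
    · -- subtracting the case `v = 0` cancels the `χ`- and `φ`-terms
      have h1 := hV x 0 0 v
      have h0 := hV x 0 0 0
      simp only [map_zero, map_add, map_sub, hρadd, hρ0, add_zero] at h1 h0
      linear_combination (norm := abel) h1 - h0
    · have hxy := hV (α.symm x) (α.symm y) 0 0
      simp only [LinearEquiv.apply_symm_apply, map_zero, hρ0, zero_add, sub_zero, add_zero] at hxy
      linear_combination (norm := abel) hxy
  · rintro ⟨hcomp, hcoc⟩
    refine h.forall_iff_forall_section_add_incl.2 fun x u => ?_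
    refine h.forall_iff_forall_section_add_incl.2 fun y v => (hcoord x y u v).2 ?_
    have hαxy := hcoc (α x) (α y)
    simp only [LinearEquiv.symm_apply_apply] at hαxy
    simp only [map_add, map_sub, hρadd, hcomp]
    linear_combination (norm := abel) hαxy

theorem IsSplitting.liftOfPair_comm_iff (h : IsSplitting i p s r) {U : e →ₗ[k] e}
    {S : V →ₗ[k] V} {N : g →ₗ[k] g} {F : g → V} (hUi : ∀ v, U (i v) = i (S v))
    (hF : ∀ x, i (F x) = U (s x) - s (N x)) (hβS : ∀ v, β (S v) = S (β v))
    (hαN : ∀ x, α (N x) = N (α x)) :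
    (∀ a, liftOfPair i p s r β α φ (U a) = U (liftOfPair i p s r β α φ a)) ↔
      ∀ x, β (F (α.symm x)) - F x = S (φ x) - φ (N x) := by
  have hcoord : ∀ x u, liftOfPair i p s r β α φ (U (s x + i u)) =
        U (liftOfPair i p s r β α φ (s x + i u)) ↔
      β (F x) - F (α x) = S (φ (α x)) - φ (N (α x)) := fun x u => by
    rw [map_section_add_incl hUi hF, h.liftOfPair_section_add_incl,
      h.liftOfPair_section_add_incl, map_section_add_incl hUi hF, h.section_add_incl_inj]
    simp only [hαN, true_and, map_add, hβS]
    constructor <;> intro H <;> linear_combination (norm := abel) H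
  rw [h.forall_iff_forall_section_add_incl]
  simp only [hcoord]
  exact ⟨fun H x => by simpa using H (α.symm x) 0, fun H x _ => by simpa using H (α x)⟩

end Extension

end AbelianExtension

open AbelianExtension

theorem stmt_12_general {k g V e : Type*} [Field k]
    [LieRing g] [LieAlgebra k g] [AddCommGroup V] [Module k V]
    [LieRing e] [LieAlgebra k e]
    (N : g →ₗ[k] g) (S : V →ₗ[k] V) (U : e →ₗ[k] e)
    (i : V →ₗ[k] e) (p : e →ₗ[k] g)
    (hab : ∀ u v : V, ⁅i u, i v⁆ = 0)
    (hiInj : Function.Injective i)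
    (hexact : LinearMap.range i = LinearMap.ker p)
    (hUi : ∀ v : V, U (i v) = i (S v))
    -- a section of p, the induced Nijenhuis representation and the associated 2-cocycle
    (s : g →ₗ[k] e) (hs : ∀ x : g, p (s x) = x)
    (ρ : g → V → V) (hρ : ∀ (x : g) (v : V), i (ρ x v) = ⁅s x, i v⁆)
    (χ : g → g → V) (F : g → V)
    (hχ : ∀ x y : g, i (χ x y) = ⁅s x, s y⁆ - s ⁅x, y⁆)
    (hF : ∀ x : g, i (F x) = U (s x) - s (N x))
    -- (β, α) ∈ Aut(V, S) × Aut(g, N)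
    (β : V ≃ₗ[k] V) (α : g ≃ₗ[k] g)
    (hβS : ∀ v : V, β (S v) = S (β v))
    (hαLie : ∀ x y : g, α ⁅x, y⁆ = ⁅α x, α y⁆)
    (hαN : ∀ x : g, α (N x) = N (α x)) :
    -- (β, α) is inducible
    (∃ γ : e →ₗ[k] e,
        (∀ a b : e, γ ⁅a, b⁆ = ⁅γ a, γ b⁆) ∧
        Function.Bijective γ ∧
        (∀ a : e, γ (U a) = U (γ a)) ∧
        (∀ v : V, γ (i v) = i (β v)) ∧
        (∀ x : g, p (γ (s x)) = α x))
    ↔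
    -- iff (β, α) is a compatible pair and the Wells class vanishes
    ((∀ (x : g) (v : V), β (ρ x v) = ρ (α x) (β v)) ∧
     (∃ φ : g →ₗ[k] V,
        (∀ x y : g, β (χ (α.symm x) (α.symm y)) - χ x y
            = ρ x (φ y) - ρ y (φ x) - φ ⁅x, y⁆) ∧
        (∀ x : g, β (F (α.symm x)) - F x = S (φ x) - φ (N x)))) := by
  obtain ⟨r, h⟩ := exists_isSplitting hiInj hexact hs
  constructor
  · rintro ⟨γ, hγLie, -, hγU, hγi, hγs⟩
    rw [h.eq_liftOfPair β α hγi hγs] at hγLie hγU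
    obtain ⟨hcomp, hχφ⟩ := (h.liftOfPair_lie_iff _ hab hρ hχ hαLie).1 hγLie
    exact ⟨hcomp, _, hχφ, (h.liftOfPair_comm_iff _ hUi hF hβS hαN).1 hγU⟩
  · rintro ⟨hcomp, φ, hχφ, hFφ⟩
    refine ⟨liftOfPair i p s r β α φ, (h.liftOfPair_lie_iff φ hab hρ hχ hαLie).2 ⟨hcomp, hχφ⟩,
      h.liftOfPair_bijective β α φ, (h.liftOfPair_comm_iff φ hUi hF hβS hαN).2 hFφ,
      h.liftOfPair_incl β α φ, fun x => ?_⟩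
    rw [h.proj_liftOfPair, h.proj_section]

/-- Given an abelian extension of the Nijenhuis Lie algebra `(g, N)`
by `(V, S)` with induced Nijenhuis representation `(V, ρ, S)`, a section `s` and the
associated 2-cocycle `(χ, F)`, a pair `(β, α) ∈ Aut(V,S) × Aut(g,N)` is inducible if
and only if (1) it is a compatible pair and (2) the transformed 2-cocycle differs
from `(χ, F)` by a coboundary. -/
theorem stmt_12 {k g V e : Type*} [Field k]
    [LieRing g] [LieAlgebra k g] [AddCommGroup V] [Module k V]
    [LieRing e] [LieAlgebra k e]
    (N : g →ₗ[k] g) (S : V →ₗ[k] V) (U : e →ₗ[k] e)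
    (hN : ∀ x y : g, ⁅N x, N y⁆ = N (⁅N x, y⁆ + ⁅x, N y⁆ - N ⁅x, y⁆))
    (hU : ∀ a b : e, ⁅U a, U b⁆ = U (⁅U a, b⁆ + ⁅a, U b⁆ - U ⁅a, b⁆))
    (i : V →ₗ[k] e) (p : e →ₗ[k] g)
    (hab : ∀ u v : V, ⁅i u, i v⁆ = 0)
    (hp : ∀ a b : e, p ⁅a, b⁆ = ⁅p a, p b⁆)
    (hiInj : Function.Injective i) (hpSurj : Function.Surjective p)
    (hexact : LinearMap.range i = LinearMap.ker p)
    (hUi : ∀ v : V, U (i v) = i (S v))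
    (hpU : ∀ a : e, p (U a) = N (p a))
    -- a section of p, the induced Nijenhuis representation and the associated 2-cocycle
    (s : g →ₗ[k] e) (hs : ∀ x : g, p (s x) = x)
    (ρ : g → V → V) (hρ : ∀ (x : g) (v : V), i (ρ x v) = ⁅s x, i v⁆)
    (χ : g → g → V) (F : g → V)
    (hχ : ∀ x y : g, i (χ x y) = ⁅s x, s y⁆ - s ⁅x, y⁆)
    (hF : ∀ x : g, i (F x) = U (s x) - s (N x))
    -- (β, α) ∈ Aut(V, S) × Aut(g, N)
    (β : V ≃ₗ[k] V) (α : g ≃ₗ[k] g)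
    (hβS : ∀ v : V, β (S v) = S (β v))
    (hαLie : ∀ x y : g, α ⁅x, y⁆ = ⁅α x, α y⁆)
    (hαN : ∀ x : g, α (N x) = N (α x)) :
    -- (β, α) is inducible
    (∃ γ : e →ₗ[k] e,
        (∀ a b : e, γ ⁅a, b⁆ = ⁅γ a, γ b⁆) ∧
        Function.Bijective γ ∧
        (∀ a : e, γ (U a) = U (γ a)) ∧
        (∀ v : V, γ (i v) = i (β v)) ∧
        (∀ x : g, p (γ (s x)) = α x))
    ↔
    -- iff (β, α) is a compatible pair and the Wells class vanishes
    ((∀ (x : g) (v : V), β (ρ x v) = ρ (α x) (β v)) ∧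
     (∃ φ : g →ₗ[k] V,
        (∀ x y : g, β (χ (α.symm x) (α.symm y)) - χ x y
            = ρ x (φ y) - ρ y (φ x) - φ ⁅x, y⁆) ∧
        (∀ x : g, β (F (α.symm x)) - F x = S (φ x) - φ (N x)))) :=
  stmt_12_general N S U i p hab hiInj hexact hUi s hs ρ hρ χ F hχ hF β α hβS hαLie hαN
end

section
/- Let 0 → (V, S) →ⁱ (e, [·,·]_e, U) →ᵖ (g, [·,·]_g, N) → 0 be a split abelian extension, i.e. there is a section s of p which is a Lie algebra homomorphism and satisfies U ∘ s = s ∘ N. Then the 2-cocycle (χ, F) associated to s is identically zero, and for every compatible pair (β, α) (meaning β(ρ_x v) = ρ_{α x}(β v) for all x, v), the map γ_{(β,α)} : e → e defined by γ_{(β,α)}(s x + u) := s(α x) + β u is a Lie algebra automorphism of e commuting with U and preserving V, with γ_{(β,α)}|_V = β and p ∘ γ_{(β,α)} ∘ s = α; moreover (β, α) ↦ γ_{(β,α)} is a group homomorphism splitting τ(γ) = (γ|_V, p γ s). -/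
/-!
A section `s` of `p` splits `e` as `s g ⊕ i V`. When `s` is a morphism of Nijenhuis Lie
algebras both components of the cocycle vanish, so the bracket of `e` in these coordinates is
`⁅s x + i u, s y + i v⁆ = s ⁅x, y⁆ + i (ρ x v - ρ y u)` and `U` acts as `N × S`. The map
`γ_{(β,α)}` is `α × β` in the same coordinates; compatibility of `(β, α)` with `ρ`, `N` and `S`
is exactly what makes it preserve this bracket and commute with `U`.
-/

open LinearMap

section Splitting

variable {R g V e : Type*} [Ring R] [AddCommGroup g] [Module R g] [AddCommGroup V] [Module R V]
  [AddCommGroup e] [Module R e] {i : V →ₗ[R] e} {p : e →ₗ[R] g} {s : g →ₗ[R] e}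

theorem coprod_bijective_of_exact (hi : Function.Injective i) (hexact : range i = ker p)
    (hs : ∀ x, p (s x) = x) : Function.Bijective (s.coprod i) := by
  have hpi : ∀ v, p (i v) = 0 := fun v => by
    rw [← mem_ker, ← hexact]
    exact mem_range_self i v
  constructor
  · rw [← ker_eq_bot, Submodule.eq_bot_iff]
    rintro ⟨x, v⟩ h
    have hx : x = 0 := by simpa [hs, hpi] using congrArg p (mem_ker.mp h)
    subst hx
    have hv : v = 0 := hi (by simpa using mem_ker.mp h)
    simp [hv]
  · intro a
    obtain ⟨v, hv⟩ : a - s (p a) ∈ range i := by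
      rw [hexact, mem_ker, map_sub, hs, sub_self]
    exact ⟨(p a, v), by simp [hv]⟩

variable (hi : Function.Injective i) (hexact : range i = ker p) (hs : ∀ x, p (s x) = x)

noncomputable def splitEquiv : (g × V) ≃ₗ[R] e :=
  LinearEquiv.ofBijective (s.coprod i) (coprod_bijective_of_exact hi hexact hs)

theorem splitEquiv_apply (x : g) (v : V) : splitEquiv hi hexact hs (x, v) = s x + i v :=
  rfl

/-- The automorphism `γ_{(β,α)}`. -/
noncomputable def inducedEquiv (α : g ≃ₗ[R] g) (β : V ≃ₗ[R] V) : e ≃ₗ[R] e :=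
  (splitEquiv hi hexact hs).symm ≪≫ₗ α.prodCongr β ≪≫ₗ splitEquiv hi hexact hs

theorem inducedEquiv_apply_add (α : g ≃ₗ[R] g) (β : V ≃ₗ[R] V) (x : g) (v : V) :
    inducedEquiv hi hexact hs α β (s x + i v) = s (α x) + i (β v) := by
  rw [← splitEquiv_apply hi hexact hs, inducedEquiv]
  simp only [LinearEquiv.trans_apply, LinearEquiv.symm_apply_apply, LinearEquiv.prodCongr_apply]
  rfl

theorem map_comm_of_apply_add {α : g →ₗ[R] g} {β : V →ₗ[R] V} {γ : e →ₗ[R] e}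
    {N : g →ₗ[R] g} {S : V →ₗ[R] V} {U : e →ₗ[R] e}
    (hsurj : Function.Surjective (s.coprod i))
    (hγ : ∀ x v, γ (s x + i v) = s (α x) + i (β v))
    (hsU : ∀ x, U (s x) = s (N x)) (hUi : ∀ v, U (i v) = i (S v))
    (hαN : ∀ x, α (N x) = N (α x)) (hβS : ∀ v, β (S v) = S (β v)) (a : e) :
    γ (U a) = U (γ a) := by
  obtain ⟨⟨x, v⟩, rfl⟩ := hsurj a
  simp only [coprod_apply, map_add, hsU, hUi, hγ, hαN, hβS]

end Splitting

section LieCoordinates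

variable {R g V e : Type*} [CommRing R] [LieRing g] [LieAlgebra R g] [AddCommGroup V]
  [Module R V] [LieRing e] [LieAlgebra R e] {i : V →ₗ[R] e} {s : g →ₗ[R] e} {ρ : g → V → V}

theorem lie_section_add_incl (hab : ∀ u v, ⁅i u, i v⁆ = 0)
    (hsLie : ∀ x y, s ⁅x, y⁆ = ⁅s x, s y⁆) (hρ : ∀ x v, i (ρ x v) = ⁅s x, i v⁆)
    (x y : g) (u v : V) :
    ⁅s x + i u, s y + i v⁆ = s ⁅x, y⁆ + i (ρ x v - ρ y u) := by
  rw [map_sub, hρ, hρ, hsLie, ← lie_skew (s y) (i u)]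
  simp only [lie_add, add_lie, hab]
  abel

theorem map_lie_of_apply_add {α : g →ₗ[R] g} {β : V →ₗ[R] V} {γ : e →ₗ[R] e}
    (hsurj : Function.Surjective (s.coprod i))
    (hγ : ∀ x v, γ (s x + i v) = s (α x) + i (β v))
    (hab : ∀ u v, ⁅i u, i v⁆ = 0) (hsLie : ∀ x y, s ⁅x, y⁆ = ⁅s x, s y⁆)
    (hρ : ∀ x v, i (ρ x v) = ⁅s x, i v⁆) (hαLie : ∀ x y, α ⁅x, y⁆ = ⁅α x, α y⁆)
    (hcomp : ∀ x v, β (ρ x v) = ρ (α x) (β v)) (a b : e) :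
    γ ⁅a, b⁆ = ⁅γ a, γ b⁆ := by
  obtain ⟨⟨x, u⟩, rfl⟩ := hsurj a
  obtain ⟨⟨y, v⟩, rfl⟩ := hsurj b
  simp only [coprod_apply]
  rw [lie_section_add_incl hab hsLie hρ, hγ, hγ, hγ, lie_section_add_incl hab hsLie hρ, map_sub,
    hαLie, hcomp, hcomp]

end LieCoordinates

theorem stmt_13_general {k g V e : Type*} [Field k]
    [LieRing g] [LieAlgebra k g] [AddCommGroup V] [Module k V]
    [LieRing e] [LieAlgebra k e]
    (N : g →ₗ[k] g) (S : V →ₗ[k] V) (U : e →ₗ[k] e)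
    (i : V →ₗ[k] e) (p : e →ₗ[k] g)
    (hab : ∀ u v : V, ⁅i u, i v⁆ = 0)
    (hiInj : Function.Injective i)
    (hexact : LinearMap.range i = LinearMap.ker p)
    (hUi : ∀ v : V, U (i v) = i (S v))
    -- a splitting: a section of p which is a morphism of Nijenhuis Lie algebras
    (s : g →ₗ[k] e) (hs : ∀ x : g, p (s x) = x)
    (hsLie : ∀ x y : g, s ⁅x, y⁆ = ⁅s x, s y⁆)
    (hsU : ∀ x : g, U (s x) = s (N x))
    -- the induced Nijenhuis representation
    (ρ : g → V → V) (hρ : ∀ (x : g) (v : V), i (ρ x v) = ⁅s x, i v⁆)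
    -- a compatible pair (β, α)
    (β : V ≃ₗ[k] V) (α : g ≃ₗ[k] g)
    (hβS : ∀ v : V, β (S v) = S (β v))
    (hαLie : ∀ x y : g, α ⁅x, y⁆ = ⁅α x, α y⁆)
    (hαN : ∀ x : g, α (N x) = N (α x))
    (hcomp : ∀ (x : g) (v : V), β (ρ x v) = ρ (α x) (β v)) :
    -- the 2-cocycle associated to s vanishes identically
    (∀ x y : g, ⁅s x, s y⁆ - s ⁅x, y⁆ = 0) ∧
    (∀ x : g, U (s x) - s (N x) = 0) ∧
    -- the automorphism γ_{(β,α)} induced by (β, α)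
    (∃ γ : e →ₗ[k] e,
        (∀ (x : g) (v : V), γ (s x + i v) = s (α x) + i (β v)) ∧
        (∀ a b : e, γ ⁅a, b⁆ = ⁅γ a, γ b⁆) ∧
        Function.Bijective γ ∧
        (∀ a : e, γ (U a) = U (γ a)) ∧
        (∀ v : V, γ (i v) = i (β v)) ∧
        (∀ x : g, p (γ (s x)) = α x)) ∧
    -- (β, α) ↦ γ_{(β,α)} is a group homomorphism: it sends composition to composition
    (∀ (β' : V ≃ₗ[k] V) (α' : g ≃ₗ[k] g),
        (∀ v : V, β' (S v) = S (β' v)) →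
        (∀ x y : g, α' ⁅x, y⁆ = ⁅α' x, α' y⁆) →
        (∀ x : g, α' (N x) = N (α' x)) →
        (∀ (x : g) (v : V), β' (ρ x v) = ρ (α' x) (β' v)) →
        ∀ γ γ' γ'' : e →ₗ[k] e,
          (∀ (x : g) (v : V), γ (s x + i v) = s (α x) + i (β v)) →
          (∀ (x : g) (v : V), γ' (s x + i v) = s (α' x) + i (β' v)) →
          (∀ (x : g) (v : V), γ'' (s x + i v) = s (α (α' x)) + i (β (β' v))) →
          γ'' = γ ∘ₗ γ') := by
  have hsurj := (coprod_bijective_of_exact hiInj hexact hs).2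
  set γ := inducedEquiv hiInj hexact hs α β
  have hγ : ∀ x v, γ (s x + i v) = s (α x) + i (β v) := inducedEquiv_apply_add hiInj hexact hs α β
  refine ⟨fun x y => by rw [hsLie, sub_self], fun x => by rw [hsU, sub_self],
    ⟨γ, hγ, map_lie_of_apply_add hsurj hγ hab hsLie hρ hαLie hcomp, γ.bijective,
      map_comm_of_apply_add hsurj hγ hsU hUi hαN hβS, fun v => by simpa using hγ 0 v,
      fun x => by simpa [hs] using congrArg p (hγ x 0)⟩, ?_⟩
  intro β' α' _ _ _ _ γ₁ γ₁' γ₁'' hγ₁ hγ₁' hγ₁''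
  ext a
  obtain ⟨⟨x, v⟩, rfl⟩ := hsurj a
  simp only [coprod_apply, comp_apply, hγ₁'', hγ₁', hγ₁]

/-- For a split abelian extension of a Nijenhuis Lie algebra (with a
section `s` that is a morphism of Nijenhuis Lie algebras), the associated 2-cocycle
`(χ, F)` vanishes, and every compatible pair `(β, α)` is induced by the automorphism
`γ_{(β,α)}(s x + u) = s(α x) + β u` of `e`; moreover `(β, α) ↦ γ_{(β,α)}` is a group
homomorphism splitting `τ(γ) = (γ|_V, p γ s)`. -/
theorem stmt_13 {k g V e : Type*} [Field k]
    [LieRing g] [LieAlgebra k g] [AddCommGroup V] [Module k V]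
    [LieRing e] [LieAlgebra k e]
    (N : g →ₗ[k] g) (S : V →ₗ[k] V) (U : e →ₗ[k] e)
    (hN : ∀ x y : g, ⁅N x, N y⁆ = N (⁅N x, y⁆ + ⁅x, N y⁆ - N ⁅x, y⁆))
    (hU : ∀ a b : e, ⁅U a, U b⁆ = U (⁅U a, b⁆ + ⁅a, U b⁆ - U ⁅a, b⁆))
    (i : V →ₗ[k] e) (p : e →ₗ[k] g)
    (hab : ∀ u v : V, ⁅i u, i v⁆ = 0)
    (hp : ∀ a b : e, p ⁅a, b⁆ = ⁅p a, p b⁆)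
    (hiInj : Function.Injective i) (hpSurj : Function.Surjective p)
    (hexact : LinearMap.range i = LinearMap.ker p)
    (hUi : ∀ v : V, U (i v) = i (S v))
    (hpU : ∀ a : e, p (U a) = N (p a))
    -- a splitting: a section of p which is a morphism of Nijenhuis Lie algebras
    (s : g →ₗ[k] e) (hs : ∀ x : g, p (s x) = x)
    (hsLie : ∀ x y : g, s ⁅x, y⁆ = ⁅s x, s y⁆)
    (hsU : ∀ x : g, U (s x) = s (N x))
    -- the induced Nijenhuis representation
    (ρ : g → V → V) (hρ : ∀ (x : g) (v : V), i (ρ x v) = ⁅s x, i v⁆)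
    -- a compatible pair (β, α)
    (β : V ≃ₗ[k] V) (α : g ≃ₗ[k] g)
    (hβS : ∀ v : V, β (S v) = S (β v))
    (hαLie : ∀ x y : g, α ⁅x, y⁆ = ⁅α x, α y⁆)
    (hαN : ∀ x : g, α (N x) = N (α x))
    (hcomp : ∀ (x : g) (v : V), β (ρ x v) = ρ (α x) (β v)) :
    -- the 2-cocycle associated to s vanishes identically
    (∀ x y : g, ⁅s x, s y⁆ - s ⁅x, y⁆ = 0) ∧
    (∀ x : g, U (s x) - s (N x) = 0) ∧
    -- the automorphism γ_{(β,α)} induced by (β, α)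
    (∃ γ : e →ₗ[k] e,
        (∀ (x : g) (v : V), γ (s x + i v) = s (α x) + i (β v)) ∧
        (∀ a b : e, γ ⁅a, b⁆ = ⁅γ a, γ b⁆) ∧
        Function.Bijective γ ∧
        (∀ a : e, γ (U a) = U (γ a)) ∧
        (∀ v : V, γ (i v) = i (β v)) ∧
        (∀ x : g, p (γ (s x)) = α x)) ∧
    -- (β, α) ↦ γ_{(β,α)} is a group homomorphism: it sends composition to composition
    (∀ (β' : V ≃ₗ[k] V) (α' : g ≃ₗ[k] g),
        (∀ v : V, β' (S v) = S (β' v)) →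
        (∀ x y : g, α' ⁅x, y⁆ = ⁅α' x, α' y⁆) →
        (∀ x : g, α' (N x) = N (α' x)) →
        (∀ (x : g) (v : V), β' (ρ x v) = ρ (α' x) (β' v)) →
        ∀ γ γ' γ'' : e →ₗ[k] e,
          (∀ (x : g) (v : V), γ (s x + i v) = s (α x) + i (β v)) →
          (∀ (x : g) (v : V), γ' (s x + i v) = s (α' x) + i (β' v)) →
          (∀ (x : g) (v : V), γ'' (s x + i v) = s (α (α' x)) + i (β (β' v))) →
          γ'' = γ ∘ₗ γ') :=
  stmt_13_general N S U i p hab hiInj hexact hUi s hs hsLie hsU ρ hρ β α hβS hαLie hαN hcomp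
end

section
/- Let (g, [·,·]_g, N) be a Nijenhuis Lie algebra, (V, ρ, S) a Nijenhuis representation, and (D_V, D_g) ∈ Der(V, S) × Der(g, N) a pair satisfying D_V(ρ_x v) = ρ_{D_g x} v + ρ_x(D_V v) for all x, v. If (χ, F) is a 2-cocycle of (g, N) with coefficients in (V, ρ, S), then the pair (χ_{(D_V,D_g)}, F_{(D_V,D_g)}) defined by χ_{(D_V,D_g)}(x,y) := D_V(χ(x,y)) − χ(D_g x, y) − χ(x, D_g y) and F_{(D_V,D_g)}(x) := D_V(F x) − F(D_g x) is also a 2-cocycle. -/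
/-- A 2-cocycle of the Nijenhuis Lie algebra `(g, N)` with coefficients in the
Nijenhuis representation `(V, ρ, S)`: a pair `(χ, F)` of linear maps `χ : Λ²g → V`,
`F : g → V` satisfying identities (c1) and (c2). -/
def IsNij2Cocycle (k : Type*) {g V : Type*} [Field k]
    [LieRing g] [LieAlgebra k g] [AddCommGroup V] [Module k V]
    (N : g → g) (ρ : g → V → V) (S : V → V) (χ : g → g → V) (F : g → V) : Prop :=
  (∀ x : g, IsLinearMap k (χ x)) ∧ (∀ y : g, IsLinearMap k (fun x => χ x y)) ∧
  IsLinearMap k F ∧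
  (∀ x : g, χ x x = 0) ∧
  (∀ x y z : g, ρ x (χ y z) + ρ y (χ z x) + ρ z (χ x y)
      - χ ⁅x, y⁆ z - χ ⁅y, z⁆ x - χ ⁅z, x⁆ y = 0) ∧
  (∀ x y : g, χ (N x) (N y) - S (χ (N x) y + χ x (N y) - S (χ x y))
      - F (⁅N x, y⁆ + ⁅x, N y⁆ - N ⁅x, y⁆)
      + ρ (N x) (F y) - ρ (N y) (F x)
      - S (ρ x (F y) - ρ y (F x) - F ⁅x, y⁆) = 0)

/-!
The pair `(D_V, D_g)` acts on cochains by `F ↦ D_V ∘ F - F ∘ D_g` and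
`χ ↦ D_V ∘ χ - χ(D_g ·, ·) - χ(·, D_g ·)`. Because `D_g` is a derivation commuting with `N`,
`D_V` commutes with `S`, and `D_V ∘ ρ_x = ρ_{D_g x} + ρ_x ∘ D_V`, both components of the
coboundary intertwine this action: the coboundary of the transformed pair is the transform of the
coboundary of `(χ, F)`, which vanishes. Bilinearity and the alternating property pass to the
transform directly, the latter by polarization.
-/

section DerivationAction

variable {k g V : Type*} [CommRing k] [LieRing g] [LieAlgebra k g] [AddCommGroup V] [Module k V]

-- The left-hand sides of (c1) and (c2): the two components of the coboundary of `(χ, F)`.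
def ceCoboundary (ρ : g → V → V) (χ : g → g → V) (x y z : g) : V :=
  ρ x (χ y z) + ρ y (χ z x) + ρ z (χ x y) - χ ⁅x, y⁆ z - χ ⁅y, z⁆ x - χ ⁅z, x⁆ y

def nijCoboundary (N : g → g) (ρ : g → V → V) (S : V → V) (χ : g → g → V) (F : g → V)
    (x y : g) : V :=
  χ (N x) (N y) - S (χ (N x) y + χ x (N y) - S (χ x y))
    - F (⁅N x, y⁆ + ⁅x, N y⁆ - N ⁅x, y⁆)
    + ρ (N x) (F y) - ρ (N y) (F x)
    - S (ρ x (F y) - ρ y (F x) - F ⁅x, y⁆)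

-- The action of `(D_V, D_g)` on cochains; `derivAct₂ DV Dg χ` is the paper's `χ_{(D_V,D_g)}`.
def derivAct₁ (DV : V → V) (Dg : g → g) (F : g → V) (x : g) : V :=
  DV (F x) - F (Dg x)

def derivAct₂ (DV : V → V) (Dg : g → g) (χ : g → g → V) (x y : g) : V :=
  DV (χ x y) - χ (Dg x) y - χ x (Dg y)

variable (DV : V →ₗ[k] V) (Dg : g →ₗ[k] g) {χ : g → g → V} {F : g → V}

theorem isLinearMap_derivAct₁ (hF : IsLinearMap k F) : IsLinearMap k (derivAct₁ DV Dg F) :=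
  (DV ∘ₗ hF.mk' F - hF.mk' F ∘ₗ Dg).isLinear

theorem isLinearMap_derivAct₂_left (hχ : ∀ x, IsLinearMap k (χ x)) (x : g) :
    IsLinearMap k (derivAct₂ DV Dg χ x) :=
  (DV ∘ₗ (hχ x).mk' _ - (hχ (Dg x)).mk' _ - (hχ x).mk' _ ∘ₗ Dg).isLinear

theorem isLinearMap_derivAct₂_right (hχ : ∀ y, IsLinearMap k (fun x => χ x y)) (y : g) :
    IsLinearMap k (fun x => derivAct₂ DV Dg χ x y) :=
  (DV ∘ₗ (hχ y).mk' _ - (hχ y).mk' _ ∘ₗ Dg - (hχ (Dg y)).mk' _).isLinear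

theorem derivAct₂_self (hχ₁ : ∀ x, IsLinearMap k (χ x)) (hχ₂ : ∀ y, IsLinearMap k (fun x => χ x y))
    (hχ : ∀ x, χ x x = 0) (x : g) : derivAct₂ DV Dg χ x x = 0 := by
  have hpol := hχ (x + Dg x)
  rw [(hχ₂ _).map_add, (hχ₁ _).map_add, (hχ₁ _).map_add, hχ, hχ] at hpol
  rw [derivAct₂, hχ, map_zero]
  linear_combination (norm := abel) -hpol

theorem ceCoboundary_derivAct₂ (hχ : ∀ y, IsLinearMap k (fun x => χ x y))
    (hDg : ∀ x y : g, Dg ⁅x, y⁆ = ⁅Dg x, y⁆ + ⁅x, Dg y⁆) (ρ : g →ₗ[k] V →ₗ[k] V)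
    (hρ : ∀ (x : g) (v : V), DV (ρ x v) = ρ (Dg x) v + ρ x (DV v)) (x y z : g) :
    ceCoboundary (fun x v => ρ x v) (derivAct₂ DV Dg χ) x y z =
      DV (ceCoboundary (fun x v => ρ x v) χ x y z) - ceCoboundary (fun x v => ρ x v) χ (Dg x) y z
        - ceCoboundary (fun x v => ρ x v) χ x (Dg y) z
        - ceCoboundary (fun x v => ρ x v) χ x y (Dg z) := by
  simp only [ceCoboundary, derivAct₂, hDg, map_add, map_sub, hρ, (hχ _).map_add]
  abel

theorem nijCoboundary_derivAct (hF : IsLinearMap k F)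
    (hDg : ∀ x y : g, Dg ⁅x, y⁆ = ⁅Dg x, y⁆ + ⁅x, Dg y⁆) (N : g →ₗ[k] g)
    (hDgN : ∀ x : g, Dg (N x) = N (Dg x)) (ρ : g →ₗ[k] V →ₗ[k] V)
    (hρ : ∀ (x : g) (v : V), DV (ρ x v) = ρ (Dg x) v + ρ x (DV v)) (S : V →ₗ[k] V)
    (hDVS : ∀ v : V, DV (S v) = S (DV v)) (x y : g) :
    nijCoboundary N (fun x v => ρ x v) S (derivAct₂ DV Dg χ) (derivAct₁ DV Dg F) x y =
      DV (nijCoboundary N (fun x v => ρ x v) S χ F x y)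
        - nijCoboundary N (fun x v => ρ x v) S χ F (Dg x) y
        - nijCoboundary N (fun x v => ρ x v) S χ F x (Dg y) := by
  simp only [nijCoboundary, derivAct₁, derivAct₂, hDg, hDgN, map_add, map_sub, hρ, hDVS,
    hF.map_add, hF.map_sub]
  abel

end DerivationAction

theorem stmt_15_general {k g V : Type*} [Field k]
    [LieRing g] [LieAlgebra k g] [AddCommGroup V] [Module k V]
    (N : g →ₗ[k] g)
    (ρ : g →ₗ[k] V →ₗ[k] V)
    (S : V →ₗ[k] V)
    -- a pair (D_V, D_g) ∈ Der(V, S) × Der(g, N) compatible with ρ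
    (DV : V →ₗ[k] V) (Dg : g →ₗ[k] g)
    (hDVS : ∀ v : V, DV (S v) = S (DV v))
    (hDgLie : ∀ x y : g, Dg ⁅x, y⁆ = ⁅Dg x, y⁆ + ⁅x, Dg y⁆)
    (hDgN : ∀ x : g, Dg (N x) = N (Dg x))
    (hcomp : ∀ (x : g) (v : V), DV (ρ x v) = ρ (Dg x) v + ρ x (DV v))
    -- a 2-cocycle (χ, F)
    (χ : g → g → V) (F : g → V)
    (hc : IsNij2Cocycle k (⇑N) (fun x v => ρ x v) (⇑S) χ F) :
    IsNij2Cocycle k (⇑N) (fun x v => ρ x v) (⇑S)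
      (fun x y => DV (χ x y) - χ (Dg x) y - χ x (Dg y))
      (fun x => DV (F x) - F (Dg x)) := by
  obtain ⟨hχ₁, hχ₂, hF, hχ, hc₁, hc₂⟩ := hc
  refine ⟨isLinearMap_derivAct₂_left DV Dg hχ₁, isLinearMap_derivAct₂_right DV Dg hχ₂,
    isLinearMap_derivAct₁ DV Dg hF, derivAct₂_self DV Dg hχ₁ hχ₂ hχ, fun x y z => ?_,
    fun x y => ?_⟩
  · have h₁ : ∀ x y z, ceCoboundary (fun x v => ρ x v) χ x y z = 0 := hc₁
    show ceCoboundary (fun x v => ρ x v) (derivAct₂ DV Dg χ) x y z = 0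
    rw [ceCoboundary_derivAct₂ DV Dg hχ₂ hDgLie ρ hcomp, h₁, h₁, h₁, h₁, map_zero]
    abel
  · have h₂ : ∀ x y, nijCoboundary N (fun x v => ρ x v) S χ F x y = 0 := hc₂
    show nijCoboundary N (fun x v => ρ x v) S (derivAct₂ DV Dg χ) (derivAct₁ DV Dg F) x y = 0
    rw [nijCoboundary_derivAct DV Dg hF hDgLie N hDgN ρ hcomp S hDVS, h₂, h₂, h₂, map_zero]
    abel

/-- If `(D_V, D_g)` is a compatible pair of Nijenhuis Lie algebra
derivations and `(χ, F)` is a 2-cocycle of `(g, N)` with coefficients in the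
Nijenhuis representation `(V, ρ, S)`, then the transformed pair
`(χ_{(D_V,D_g)}, F_{(D_V,D_g)})` is also a 2-cocycle. -/
theorem stmt_15 {k g V : Type*} [Field k]
    [LieRing g] [LieAlgebra k g] [AddCommGroup V] [Module k V]
    (N : g →ₗ[k] g)
    (hN : ∀ x y : g, ⁅N x, N y⁆ = N (⁅N x, y⁆ + ⁅x, N y⁆ - N ⁅x, y⁆))
    (ρ : g →ₗ[k] V →ₗ[k] V)
    (hρ : ∀ (x y : g) (v : V), ρ ⁅x, y⁆ v = ρ x (ρ y v) - ρ y (ρ x v))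
    (S : V →ₗ[k] V)
    (hNS : ∀ (x : g) (v : V), ρ (N x) (S v) = S (ρ (N x) v + ρ x (S v) - S (ρ x v)))
    -- a pair (D_V, D_g) ∈ Der(V, S) × Der(g, N) compatible with ρ
    (DV : V →ₗ[k] V) (Dg : g →ₗ[k] g)
    (hDVS : ∀ v : V, DV (S v) = S (DV v))
    (hDgLie : ∀ x y : g, Dg ⁅x, y⁆ = ⁅Dg x, y⁆ + ⁅x, Dg y⁆)
    (hDgN : ∀ x : g, Dg (N x) = N (Dg x))
    (hcomp : ∀ (x : g) (v : V), DV (ρ x v) = ρ (Dg x) v + ρ x (DV v))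
    -- a 2-cocycle (χ, F)
    (χ : g → g → V) (F : g → V)
    (hc : IsNij2Cocycle k (⇑N) (fun x v => ρ x v) (⇑S) χ F) :
    IsNij2Cocycle k (⇑N) (fun x v => ρ x v) (⇑S)
      (fun x y => DV (χ x y) - χ (Dg x) y - χ x (Dg y))
      (fun x => DV (F x) - F (Dg x)) :=
  stmt_15_general N ρ S DV Dg hDVS hDgLie hDgN hcomp χ F hc
end

section
/- Let (g, [·,·]_g, N) be a Nijenhuis Lie algebra and (V, ρ, S) a Nijenhuis representation. For a pair (D_V, D_g) of linear maps D_V : V → V, D_g : g → g and linear maps χ : Λ²g → V, F : g → V, define the action A_{(D_V,D_g)}(χ, F) := (D_V ∘ χ − χ ∘ (D_g ⊗ id) − χ ∘ (id ⊗ D_g), D_V ∘ F − F ∘ D_g). Then for any two pairs (D_V, D_g) and (D'_V, D'_g), one has A_{(D_V,D_g)} ∘ A_{(D'_V,D'_g)} − A_{(D'_V,D'_g)} ∘ A_{(D_V,D_g)} = A_{(D_V D'_V − D'_V D_V, D_g D'_g − D'_g D_g)} on all pairs (χ, F). In particular, the induced map Θ on the second cohomology group defines a representation of the Lie algebra D_ρ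 of compatible derivation pairs. -/
/-!
Both sides are expanded pointwise; on two-argument maps the mixed terms `χ (B x) (B' y)` and
`χ (B' x) (B y)` produced by the two compositions cancel in the commutator.
-/

namespace LinearMap

variable {R M V : Type*} [Ring R] [AddCommGroup M] [AddCommGroup V] [Module R M] [Module R V]

def endPairAct (A : V →ₗ[R] V) (B : M →ₗ[R] M) (f : M → V) : M → V :=
  fun x => A (f x) - f (B x)

def endPairAct₂ (A : V →ₗ[R] V) (B : M →ₗ[R] M) (χ : M → M → V) : M → M → V :=
  fun x y => A (χ x y) - χ (B x) y - χ x (B y)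

theorem endPairAct_commutator (A A' : V →ₗ[R] V) (B B' : M →ₗ[R] M) (f : M → V)
    (hf : ∀ x x', f (x - x') = f x - f x') :
    endPairAct A B (endPairAct A' B' f) - endPairAct A' B' (endPairAct A B f)
      = endPairAct (A ∘ₗ A' - A' ∘ₗ A) (B ∘ₗ B' - B' ∘ₗ B) f := by
  funext x
  simp only [endPairAct, Pi.sub_apply, sub_apply, comp_apply, map_sub, hf]
  abel

theorem endPairAct₂_commutator (A A' : V →ₗ[R] V) (B B' : M →ₗ[R] M) (χ : M → M → V)
    (hχ₁ : ∀ x x' y, χ (x - x') y = χ x y - χ x' y)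
    (hχ₂ : ∀ x y y', χ x (y - y') = χ x y - χ x y') :
    endPairAct₂ A B (endPairAct₂ A' B' χ) - endPairAct₂ A' B' (endPairAct₂ A B χ)
      = endPairAct₂ (A ∘ₗ A' - A' ∘ₗ A) (B ∘ₗ B' - B' ∘ₗ B) χ := by
  funext x y
  simp only [endPairAct₂, Pi.sub_apply, sub_apply, comp_apply, map_sub, hχ₁, hχ₂]
  abel

end LinearMap

theorem stmt_17_general {k g V : Type*} [Field k]
    [LieRing g] [LieAlgebra k g] [AddCommGroup V] [Module k V] :
    -- the action of a pair of linear maps on pairs (χ, F)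
    ∀ act : (V →ₗ[k] V) → (g →ₗ[k] g) → (g → g → V) → (g → g → V),
      act = (fun A B c => fun x y => A (c x y) - c (B x) y - c x (B y)) →
    ∀ actF : (V →ₗ[k] V) → (g →ₗ[k] g) → (g → V) → (g → V),
      actF = (fun A B f => fun x => A (f x) - f (B x)) →
    -- for any two pairs of linear maps, the commutator identity holds on all
    -- bilinear maps χ and all linear maps F
    ∀ DV DV' : V →ₗ[k] V, ∀ Dg Dg' : g →ₗ[k] g,
      (∀ χ : g → g → V,
        (∀ x : g, IsLinearMap k (χ x)) → (∀ y : g, IsLinearMap k (fun x => χ x y)) →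
        act DV Dg (act DV' Dg' χ) - act DV' Dg' (act DV Dg χ)
          = act (DV ∘ₗ DV' - DV' ∘ₗ DV) (Dg ∘ₗ Dg' - Dg' ∘ₗ Dg) χ) ∧
      (∀ F : g → V, IsLinearMap k F →
        actF DV Dg (actF DV' Dg' F) - actF DV' Dg' (actF DV Dg F)
          = actF (DV ∘ₗ DV' - DV' ∘ₗ DV) (Dg ∘ₗ Dg' - Dg' ∘ₗ Dg) F) := by
  rintro act rfl actF rfl DV DV' Dg Dg'
  refine ⟨fun χ hχ₂ hχ₁ => ?_, fun F hF => ?_⟩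
  · exact LinearMap.endPairAct₂_commutator DV DV' Dg Dg' χ
      (fun _ _ y => (hχ₁ y).map_sub _ _) (fun x _ _ => (hχ₂ x).map_sub _ _)
  · exact LinearMap.endPairAct_commutator DV DV' Dg Dg' F hF.map_sub

/-- The action `A_{(D_V,D_g)}(χ, F) = (D_V∘χ - χ∘(D_g⊗id) - χ∘(id⊗D_g),
D_V∘F - F∘D_g)` on pairs satisfies the commutator identity
`A_{(D_V,D_g)} ∘ A_{(D'_V,D'_g)} - A_{(D'_V,D'_g)} ∘ A_{(D_V,D_g)}
 = A_{([D_V,D'_V], [D_g,D'_g])}`, so the induced map `Θ` on the second cohomology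
group defines a representation of the Lie algebra `D_ρ` of compatible derivation
pairs. -/
theorem stmt_17 {k g V : Type*} [Field k]
    [LieRing g] [LieAlgebra k g] [AddCommGroup V] [Module k V]
    (N : g →ₗ[k] g)
    (hN : ∀ x y : g, ⁅N x, N y⁆ = N (⁅N x, y⁆ + ⁅x, N y⁆ - N ⁅x, y⁆))
    (ρ : g →ₗ[k] V →ₗ[k] V)
    (hρ : ∀ (x y : g) (v : V), ρ ⁅x, y⁆ v = ρ x (ρ y v) - ρ y (ρ x v))
    (S : V →ₗ[k] V)
    (hNS : ∀ (x : g) (v : V), ρ (N x) (S v) = S (ρ (N x) v + ρ x (S v) - S (ρ x v))) :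
    -- the action of a pair of linear maps on pairs (χ, F)
    ∀ act : (V →ₗ[k] V) → (g →ₗ[k] g) → (g → g → V) → (g → g → V),
      act = (fun A B c => fun x y => A (c x y) - c (B x) y - c x (B y)) →
    ∀ actF : (V →ₗ[k] V) → (g →ₗ[k] g) → (g → V) → (g → V),
      actF = (fun A B f => fun x => A (f x) - f (B x)) →
    -- for any two pairs of linear maps, the commutator identity holds on all
    -- bilinear maps χ and all linear maps F
    ∀ DV DV' : V →ₗ[k] V, ∀ Dg Dg' : g →ₗ[k] g,
      (∀ χ : g → g → V,
        (∀ x : g, IsLinearMap k (χ x)) → (∀ y : g, IsLinearMap k (fun x => χ x y)) →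
        act DV Dg (act DV' Dg' χ) - act DV' Dg' (act DV Dg χ)
          = act (DV ∘ₗ DV' - DV' ∘ₗ DV) (Dg ∘ₗ Dg' - Dg' ∘ₗ Dg) χ) ∧
      (∀ F : g → V, IsLinearMap k F →
        actF DV Dg (actF DV' Dg' F) - actF DV' Dg' (actF DV Dg F)
          = actF (DV ∘ₗ DV' - DV' ∘ₗ DV) (Dg ∘ₗ Dg' - Dg' ∘ₗ Dg) F) :=
  stmt_17_general
end
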